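/- arXiv:1505.07330 — 12 statements merged into one kernel-verified Lean document; each statement's English description precedes it below -/
import Mathlib

section
/- Let A be a unital *-algebra over ℂ and let (M,h,g,φ) be a real metric calculus over A. Then there exists at most one affine connection ∇ on (M,g) such that (M,h,g,φ,∇) is a pseudo-Riemannian calculus; i.e., if ∇ and ∇' are affine connections on (M,g) making (M,h,g,φ,∇) and (M,h,g,φ,∇') pseudo-Riemannian calculi, then ∇_d U = ∇'_d U for all d ∈ g and U ∈ M. -/
open MulOpposite

/-- The commutator of two maps `A → A` (the Lie bracket of derivations). -/
def derComm {A : Type*} [Ring A] (d₁ d₂ : A → A) : A → A :=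
  fun a => d₁ (d₂ a) - d₂ (d₁ a)

/-- Multiplication of a map `A → A` by a real scalar, where `A` is a `ℂ`-algebra. -/
def rSMul {A : Type*} [Ring A] [Algebra ℂ A] (r : ℝ) (d : A → A) : A → A :=
  fun a => algebraMap ℂ A (r : ℂ) * d a

/-- A derivation of a (possibly noncommutative) algebra `A` into itself. -/
structure IsDerivation {A : Type*} [Ring A] (d : A → A) : Prop where
  map_add : ∀ a b : A, d (a + b) = d a + d b
  leibniz : ∀ a b : A, d (a * b) = d a * b + a * d b

/-- `g` is a real Lie algebra of hermitian derivations of the `∗`-algebra `A`. -/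
structure IsRealLieAlgebraOfHermitianDerivations {A : Type*} [Ring A] [StarRing A]
    [Algebra ℂ A] (g : Set (A → A)) : Prop where
  zero_mem : (0 : A → A) ∈ g
  add_mem : ∀ {d d' : A → A}, d ∈ g → d' ∈ g → d + d' ∈ g
  smul_mem : ∀ (r : ℝ) {d : A → A}, d ∈ g → rSMul r d ∈ g
  bracket_mem : ∀ {d d' : A → A}, d ∈ g → d' ∈ g → derComm d d' ∈ g
  isDerivation : ∀ {d : A → A}, d ∈ g → IsDerivation d
  hermitian : ∀ {d : A → A}, d ∈ g → ∀ a : A, d (star a) = star (d a)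

/-- A hermitian form on a right `A`-module `M` (a right module is encoded as a
module over the opposite algebra `Aᵐᵒᵖ`; `op a • U` is the right action `U·a`). -/
structure IsHermitianForm {A : Type*} [Ring A] [StarRing A]
    {M : Type*} [AddCommGroup M] [Module Aᵐᵒᵖ M] (h : M → M → A) : Prop where
  add_left : ∀ U V W : M, h (U + V) W = h U W + h V W
  add_right : ∀ U V W : M, h U (V + W) = h U V + h U W
  smul_right : ∀ (U V : M) (a : A), h U (op a • V) = h U V * a
  star_h : ∀ U V : M, star (h U V) = h V U

/-- A real metric calculus `(M, h, g, φ)` over a unital `∗`-algebra `A`. -/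
structure RealMetricCalculus {A : Type*} [Ring A] [StarRing A] [Algebra ℂ A]
    {M : Type*} [AddCommGroup M] [Module Aᵐᵒᵖ M]
    (h : M → M → A) (g : Set (A → A)) (φ : (A → A) → M) : Prop where
  hermitianForm : IsHermitianForm h
  nondegenerate : ∀ U : M, (∀ V : M, h U V = 0) → U = 0
  lieAlg : IsRealLieAlgebraOfHermitianDerivations g
  φ_add : ∀ {d d' : A → A}, d ∈ g → d' ∈ g → φ (d + d') = φ d + φ d'
  φ_smul : ∀ (r : ℝ) {d : A → A}, d ∈ g →
    φ (rSMul r d) = op (algebraMap ℂ A (r : ℂ)) • φ d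
  generates : Submodule.span Aᵐᵒᵖ (φ '' g) = ⊤
  herm_prod : ∀ {d d' : A → A}, d ∈ g → d' ∈ g →
    star (h (φ d) (φ d')) = h (φ d) (φ d')

/-- An affine connection on `(M, g)`. -/
structure IsAffineConnection {A : Type*} [Ring A] [StarRing A] [Algebra ℂ A]
    {M : Type*} [AddCommGroup M] [Module Aᵐᵒᵖ M]
    (g : Set (A → A)) (cn : (A → A) → M → M) : Prop where
  add_mod : ∀ {d : A → A}, d ∈ g → ∀ U V : M, cn d (U + V) = cn d U + cn d V
  add_der : ∀ {d d' : A → A}, d ∈ g → d' ∈ g → ∀ U : M, cn (d + d') U = cn d U + cn d' U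
  smul_der : ∀ (r : ℝ) {d : A → A}, d ∈ g → ∀ U : M,
    cn (rSMul r d) U = op (algebraMap ℂ A (r : ℂ)) • cn d U
  leibniz : ∀ {d : A → A}, d ∈ g → ∀ (U : M) (a : A),
    cn d (op a • U) = op a • cn d U + op (d a) • U

/-- A pseudo-Riemannian calculus `(M, h, g, φ, ∇)`: a real connection calculus
that is metric and torsion-free. -/
structure PseudoRiemannianCalculus {A : Type*} [Ring A] [StarRing A] [Algebra ℂ A]
    {M : Type*} [AddCommGroup M] [Module Aᵐᵒᵖ M]
    (h : M → M → A) (g : Set (A → A)) (φ : (A → A) → M)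
    (cn : (A → A) → M → M) : Prop where
  toRealMetricCalculus : RealMetricCalculus h g φ
  isConnection : IsAffineConnection g cn
  real_conn : ∀ {d d₁ d₂ : A → A}, d ∈ g → d₁ ∈ g → d₂ ∈ g →
    star (h (cn d (φ d₁)) (φ d₂)) = h (cn d (φ d₁)) (φ d₂)
  metric : ∀ {d : A → A}, d ∈ g → ∀ U V : M,
    d (h U V) = h (cn d U) V + h U (cn d V)
  torsionFree : ∀ {d₁ d₂ : A → A}, d₁ ∈ g → d₂ ∈ g →
    cn d₁ (φ d₂) - cn d₂ (φ d₁) - φ (derComm d₁ d₂) = 0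

/-- The curvature operator of a connection. -/
def curvatureOp {A : Type*} [Ring A] {M : Type*} [AddCommGroup M]
    (cn : (A → A) → M → M) (d₁ d₂ : A → A) (U : M) : M :=
  cn d₁ (cn d₂ U) - cn d₂ (cn d₁ U) - cn (derComm d₁ d₂) U

/-!
The difference `Δ = ∇ - ∇'` of two such connections is `A`-linear in its module argument, so it
is determined by the values `T(d, d₁, d₂) = h(Δ_d φ(d₁), φ(d₂))`. Torsion-freeness makes `T`
symmetric in `(d, d₁)`, while metric compatibility together with reality makes it antisymmetric
in `(d₁, d₂)`. A form with these two symmetries vanishes, since six transpositions turn `T` into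
`-T`; nondegeneracy of `h` and the fact that `φ(g)` generates `M` then give `Δ = 0`.
-/

theorem eq_zero_of_symm_of_antisymm {ι G : Type*} [AddGroup G] [IsAddTorsionFree G]
    {s : Set ι} {T : ι → ι → ι → G}
    (symm : ∀ a ∈ s, ∀ b ∈ s, ∀ c, T a b c = T b a c)
    (antisymm : ∀ a ∈ s, ∀ b ∈ s, ∀ c ∈ s, T a b c = -T a c b)
    {a b c : ι} (ha : a ∈ s) (hb : b ∈ s) (hc : c ∈ s) : T a b c = 0 :=
  self_eq_neg.mp <| calc
    T a b c = -T a c b := antisymm a ha b hb c hc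
    _ = -T c a b := by rw [symm a ha c hc b]
    _ = T c b a := by rw [antisymm c hc a ha b hb, neg_neg]
    _ = T b c a := symm c hc b hb a
    _ = -T b a c := antisymm b hb c hc a ha
    _ = -T a b c := by rw [symm b hb a ha c]

namespace IsHermitianForm

variable {A : Type*} [Ring A] [StarRing A] {M : Type*} [AddCommGroup M] [Module Aᵐᵒᵖ M]
  {h : M → M → A}

def rightLinearMap (hf : IsHermitianForm h) (U : M) : M →ₗ[Aᵐᵒᵖ] A where
  toFun := h U
  map_add' := hf.add_right U
  map_smul' a V := by
    rw [← op_unop a, hf.smul_right, RingHom.id_apply, op_smul_eq_mul]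

theorem sub_right (hf : IsHermitianForm h) (U V W : M) : h U (V - W) = h U V - h U W :=
  map_sub (hf.rightLinearMap U) V W

theorem sub_left (hf : IsHermitianForm h) (U V W : M) : h (U - V) W = h U W - h V W := by
  rw [← hf.star_h, hf.sub_right, star_sub, hf.star_h, hf.star_h]

end IsHermitianForm

namespace IsAffineConnection

variable {A : Type*} [Ring A] [StarRing A] [Algebra ℂ A] {M : Type*} [AddCommGroup M]
  [Module Aᵐᵒᵖ M] {g : Set (A → A)} {cn cn' : (A → A) → M → M}

def diff (C : IsAffineConnection g cn) (C' : IsAffineConnection g cn') {d : A → A}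
    (hd : d ∈ g) : M →ₗ[Aᵐᵒᵖ] M where
  toFun U := cn d U - cn' d U
  map_add' U V := by
    rw [C.add_mod hd, C'.add_mod hd]
    abel
  map_smul' a U := by
    rw [← op_unop a, C.leibniz hd, C'.leibniz hd, RingHom.id_apply, smul_sub]
    abel

end IsAffineConnection

namespace PseudoRiemannianCalculus

variable {A : Type*} [Ring A] [StarRing A] [Algebra ℂ A] {M : Type*} [AddCommGroup M]
  [Module Aᵐᵒᵖ M] {h : M → M → A} {g : Set (A → A)} {φ : (A → A) → M}
  {cn cn' : (A → A) → M → M}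

theorem diff_symm (H : PseudoRiemannianCalculus h g φ cn)
    (H' : PseudoRiemannianCalculus h g φ cn') {d₁ d₂ : A → A} (hd₁ : d₁ ∈ g) (hd₂ : d₂ ∈ g) :
    cn d₁ (φ d₂) - cn' d₁ (φ d₂) = cn d₂ (φ d₁) - cn' d₂ (φ d₁) := by
  have torsion := sub_eq_zero.mp (H.torsionFree hd₁ hd₂)
  have torsion' := sub_eq_zero.mp (H'.torsionFree hd₁ hd₂)
  rw [← torsion'] at torsion
  rw [sub_eq_sub_iff_add_eq_add] at torsion ⊢
  rw [torsion, add_comm]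

theorem h_diff_antisymm (H : PseudoRiemannianCalculus h g φ cn)
    (H' : PseudoRiemannianCalculus h g φ cn') {d d₁ d₂ : A → A}
    (hd : d ∈ g) (hd₁ : d₁ ∈ g) (hd₂ : d₂ ∈ g) :
    h (cn d (φ d₁) - cn' d (φ d₁)) (φ d₂) = -h (cn d (φ d₂) - cn' d (φ d₂)) (φ d₁) := by
  have hf := H.toRealMetricCalculus.hermitianForm
  have metric := H.metric hd (φ d₁) (φ d₂)
  rw [H'.metric hd] at metric
  rw [hf.sub_left, hf.sub_left, ← H.real_conn hd hd₂ hd₁, ← H'.real_conn hd hd₂ hd₁,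
    hf.star_h, hf.star_h, neg_sub, sub_eq_sub_iff_add_eq_add, ← metric, add_comm]

theorem h_diff_eq_zero (H : PseudoRiemannianCalculus h g φ cn)
    (H' : PseudoRiemannianCalculus h g φ cn') {d d₁ d₂ : A → A}
    (hd : d ∈ g) (hd₁ : d₁ ∈ g) (hd₂ : d₂ ∈ g) :
    h (cn d (φ d₁) - cn' d (φ d₁)) (φ d₂) = 0 :=
  have := IsAddTorsionFree.of_isTorsionFree ℂ A
  eq_zero_of_symm_of_antisymm (T := fun d d₁ d₂ => h (cn d (φ d₁) - cn' d (φ d₁)) (φ d₂))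
    (fun _ ha _ hb _ => by rw [H.diff_symm H' ha hb])
    (fun _ ha _ hb _ hc => H.h_diff_antisymm H' ha hb hc) hd hd₁ hd₂

theorem eq_on_image (H : PseudoRiemannianCalculus h g φ cn)
    (H' : PseudoRiemannianCalculus h g φ cn') {d d₁ : A → A} (hd : d ∈ g) (hd₁ : d₁ ∈ g) :
    cn d (φ d₁) = cn' d (φ d₁) := by
  have R := H.toRealMetricCalculus
  refine sub_eq_zero.mp (R.nondegenerate _ fun V => ?_)
  have hform : R.hermitianForm.rightLinearMap (cn d (φ d₁) - cn' d (φ d₁)) = 0 :=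
    LinearMap.ext_on R.generates <| by
      rintro _ ⟨d₂, hd₂, rfl⟩
      exact H.h_diff_eq_zero H' hd hd₁ hd₂
  exact LinearMap.congr_fun hform V

end PseudoRiemannianCalculus

/-- there is at most one affine connection making a given real
metric calculus into a pseudo-Riemannian calculus. -/
theorem levi_civita_uniqueness
    {A : Type*} [Ring A] [StarRing A] [Algebra ℂ A]
    {M : Type*} [AddCommGroup M] [Module Aᵐᵒᵖ M]
    (h : M → M → A) (g : Set (A → A)) (φ : (A → A) → M)
    (cn cn' : (A → A) → M → M)
    (H : PseudoRiemannianCalculus h g φ cn)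
    (H' : PseudoRiemannianCalculus h g φ cn') :
    ∀ d ∈ g, ∀ U : M, cn d U = cn' d U := by
  intro d hd U
  have hdiff : H.isConnection.diff H'.isConnection hd = 0 :=
    LinearMap.ext_on H.toRealMetricCalculus.generates <| by
      rintro _ ⟨d₁, hd₁, rfl⟩
      exact sub_eq_zero.mpr (H.eq_on_image H' hd hd₁)
  exact sub_eq_zero.mp (LinearMap.congr_fun hdiff U)
end

section
/- Let (M,h,g,φ,∇) be a pseudo-Riemannian calculus over a unital *-algebra A, let d₁,d₂,d₃ ∈ g, and write E_a = φ(d_a). Then Koszul's formula holds: 2·h(∇_{d₁}E₂, E₃) = d₁(h(E₂,E₃)) + d₂(h(E₁,E₃)) − d₃(h(E₁,E₂)) − h(E₁, φ([d₂,d₃])) + h(E₂, φ([d₃,d₁])) + h(E₃, φ([d₁,d₂])). -/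
open MulOpposite

/-- Koszul's formula holds in any pseudo-Riemannian calculus. -/
theorem koszul_formula
    {A : Type*} [Ring A] [StarRing A] [Algebra ℂ A]
    {M : Type*} [AddCommGroup M] [Module Aᵐᵒᵖ M]
    (h : M → M → A) (g : Set (A → A)) (φ : (A → A) → M)
    (cn : (A → A) → M → M)
    (H : PseudoRiemannianCalculus h g φ cn)
    {d₁ d₂ d₃ : A → A} (h₁ : d₁ ∈ g) (h₂ : d₂ ∈ g) (h₃ : d₃ ∈ g) :
    2 * h (cn d₁ (φ d₂)) (φ d₃) =
      d₁ (h (φ d₂) (φ d₃)) + d₂ (h (φ d₁) (φ d₃)) - d₃ (h (φ d₁) (φ d₂))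
        - h (φ d₁) (φ (derComm d₂ d₃)) + h (φ d₂) (φ (derComm d₃ d₁))
        + h (φ d₃) (φ (derComm d₁ d₂)) := by

  classical
  obtain ⟨RMC, AC, rc, mc, tf⟩ := H
  have hf := RMC.hermitianForm
  have la := RMC.lieAlg
  -- bracket memberships
  have hc12 : derComm d₁ d₂ ∈ g := la.bracket_mem h₁ h₂
  have hc13 : derComm d₁ d₃ ∈ g := la.bracket_mem h₁ h₃
  have hc31 : derComm d₃ d₁ ∈ g := la.bracket_mem h₃ h₁
  have hc23 : derComm d₂ d₃ ∈ g := la.bracket_mem h₂ h₃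
  -- φ 0 = 0
  have φ0 : φ 0 = 0 := by
    have h0 := RMC.φ_add la.zero_mem la.zero_mem
    rw [add_zero] at h0
    exact left_eq_add.mp h0
  -- h U 0 = 0
  have hzero : ∀ U : M, h U 0 = 0 := by
    intro U
    have h0 := hf.add_right U 0 0
    rw [add_zero] at h0
    exact left_eq_add.mp h0
  -- subtraction lemmas for h
  have hsub_left : ∀ U V W : M, h (U - V) W = h U W - h V W := by
    intro U V W
    have := hf.add_left (U - V) V W
    rw [sub_add_cancel] at this
    rw [eq_sub_iff_add_eq, ← this]
  -- hermitian symmetry on products of φ's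
  have hsym : ∀ {e e' : A → A}, e ∈ g → e' ∈ g → h (φ e) (φ e') = h (φ e') (φ e) := by
    intro e e' he he'
    rw [← hf.star_h (φ e') (φ e), RMC.herm_prod he' he]
  -- symmetry for connection terms
  have connsym : ∀ {e e₁ e₂ : A → A}, e ∈ g → e₁ ∈ g → e₂ ∈ g →
      h (φ e₂) (cn e (φ e₁)) = h (cn e (φ e₁)) (φ e₂) := by
    intro e e₁ e₂ he he₁ he₂
    rw [← hf.star_h (cn e (φ e₁)) (φ e₂), rc he he₁ he₂]
  -- torsion-free identities
  have t13 : cn d₁ (φ d₃) = cn d₃ (φ d₁) + φ (derComm d₁ d₃) := by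
    have t := tf h₁ h₃
    rw [sub_sub, sub_eq_zero] at t
    exact t
  have t23 : cn d₂ (φ d₃) = cn d₃ (φ d₂) + φ (derComm d₂ d₃) := by
    have t := tf h₂ h₃
    rw [sub_sub, sub_eq_zero] at t
    exact t
  have t12 : cn d₂ (φ d₁) = cn d₁ (φ d₂) - φ (derComm d₁ d₂) := by
    have t := tf h₁ h₂
    rw [sub_sub, sub_eq_zero] at t
    rw [t]; abel
  -- cancellation of opposite brackets
  have sum31 : derComm d₁ d₃ + derComm d₃ d₁ = (0 : A → A) := by
    funext a
    simp only [Pi.add_apply, Pi.zero_apply, derComm]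
    abel
  have cancel : h (φ d₂) (φ (derComm d₃ d₁)) = - h (φ d₂) (φ (derComm d₁ d₃)) := by
    have : h (φ d₂) (φ (derComm d₁ d₃)) + h (φ d₂) (φ (derComm d₃ d₁)) = 0 := by
      rw [← hf.add_right, ← RMC.φ_add hc13 hc31, sum31, φ0, hzero]
    exact eq_neg_of_add_eq_zero_right this
  rw [mc h₁ (φ d₂) (φ d₃), mc h₂ (φ d₁) (φ d₃), mc h₃ (φ d₁) (φ d₂),
    t12, t13, t23, hsub_left, hf.add_right, hf.add_right,
    connsym h₃ h₁ h₂, hsym h₃ hc12, cancel, two_mul]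
  abel
end

section
/- Let (M,h,g,φ) be a real metric calculus over a unital *-algebra A and let ∇ be an affine connection on (M,g) such that Koszul's formula holds, i.e. 2·h(∇_{d₁}φ(d₂), φ(d₃)) = d₁(h(φ(d₂),φ(d₃))) + d₂(h(φ(d₁),φ(d₃))) − d₃(h(φ(d₁),φ(d₂))) − h(φ(d₁), φ([d₂,d₃])) + h(φ(d₂), φ([d₃,d₁])) + h(φ(d₃), φ([d₁,d₂])) for all d₁,d₂,d₃ ∈ g. Then (M,h,g,φ,∇) is a pseudo-Riemannian calculus, i.e. it is a real connection calculus which is metric and torsion-free. -/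
open MulOpposite

set_option linter.unusedSectionVars false

section KoszulHelpers

variable {A : Type*} [Ring A] [StarRing A] [Algebra ℂ A]
variable {M : Type*} [AddCommGroup M] [Module Aᵐᵒᵖ M]

lemma koszul_two_cancel {x y : A} (hxy : 2 * x = 2 * y) : x = y := by
  have h2 : (algebraMap ℂ A) (1/2) * 2 = 1 := by
    rw [show (2:A) = algebraMap ℂ A 2 from (map_ofNat _ 2).symm, ← map_mul]
    norm_num
  calc x = ((algebraMap ℂ A) (1/2) * 2) * x := by rw [h2, one_mul]
    _ = (algebraMap ℂ A) (1/2) * (2*x) := by rw [mul_assoc]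
    _ = (algebraMap ℂ A) (1/2) * (2*y) := by rw [hxy]
    _ = ((algebraMap ℂ A) (1/2) * 2) * y := by rw [mul_assoc]
    _ = y := by rw [h2, one_mul]

lemma koszul_der_zero {d : A → A} (Hd : IsDerivation d) : d 0 = 0 := by
  have h := Hd.map_add 0 0
  rw [add_zero] at h
  exact (left_eq_add.mp h)

lemma koszul_hf_zero_right {h : M → M → A} (Hh : IsHermitianForm h) (U : M) :
    h U 0 = 0 := by
  have hh := Hh.add_right U 0 0
  rw [add_zero] at hh
  exact (left_eq_add.mp hh)

lemma koszul_hf_zero_left {h : M → M → A} (Hh : IsHermitianForm h) (V : M) :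
    h 0 V = 0 := by
  have hh := Hh.add_left 0 0 V
  rw [add_zero] at hh
  exact (left_eq_add.mp hh)

lemma koszul_hf_neg_right {h : M → M → A} (Hh : IsHermitianForm h) (U V : M) :
    h U (-V) = - h U V := by
  have hh := Hh.add_right U V (-V)
  rw [add_neg_cancel, koszul_hf_zero_right Hh] at hh
  exact (neg_eq_of_add_eq_zero_right hh.symm).symm ▸ rfl

lemma koszul_hf_sub_right {h : M → M → A} (Hh : IsHermitianForm h) (U V W : M) :
    h U (V - W) = h U V - h U W := by
  rw [sub_eq_add_neg, Hh.add_right, koszul_hf_neg_right Hh, ← sub_eq_add_neg]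

lemma koszul_hf_neg_left {h : M → M → A} (Hh : IsHermitianForm h) (U V : M) :
    h (-U) V = - h U V := by
  have hh := Hh.add_left U (-U) V
  rw [add_neg_cancel, koszul_hf_zero_left Hh] at hh
  exact (neg_eq_of_add_eq_zero_right hh.symm).symm ▸ rfl

lemma koszul_hf_sub_left {h : M → M → A} (Hh : IsHermitianForm h) (U V W : M) :
    h (U - V) W = h U W - h V W := by
  rw [sub_eq_add_neg, Hh.add_left, koszul_hf_neg_left Hh, ← sub_eq_add_neg]

lemma koszul_hf_smul_left {h : M → M → A} (Hh : IsHermitianForm h) (U V : M) (a : A) :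
    h (op a • U) V = star a * h U V := by
  have hh := Hh.star_h V (op a • U)
  rw [Hh.smul_right, star_mul, Hh.star_h] at hh
  exact hh.symm

lemma koszul_cn_zero {g : Set (A → A)} {cn : (A → A) → M → M}
    (Hc : IsAffineConnection g cn) {d : A → A} (hd : d ∈ g) : cn d 0 = 0 := by
  have hh := Hc.add_mod hd 0 0
  rw [add_zero] at hh
  exact (left_eq_add.mp hh)

lemma koszul_phi_bracket_swap {g : Set (A → A)} {φ : (A → A) → M} {h : M → M → A}
    (Hrmc : RealMetricCalculus h g φ) {d₁ d₂ : A → A} (h1 : d₁ ∈ g) (h2 : d₂ ∈ g) :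
    φ (derComm d₂ d₁) = - φ (derComm d₁ d₂) := by
  have he : derComm d₂ d₁ = rSMul (-1) (derComm d₁ d₂) := by
    funext a
    show d₂ (d₁ a) - d₁ (d₂ a) = algebraMap ℂ A ((-1 : ℝ) : ℂ) * (d₁ (d₂ a) - d₂ (d₁ a))
    have : ((-1 : ℝ) : ℂ) = -1 := by norm_num
    rw [this, map_neg, map_one, neg_one_mul, neg_sub]
  rw [he, Hrmc.φ_smul (-1) (Hrmc.lieAlg.bracket_mem h1 h2)]
  have : ((-1 : ℝ) : ℂ) = -1 := by norm_num
  rw [this, map_neg, map_one, op_neg, op_one, neg_smul, one_smul]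

end KoszulHelpers

/-- an affine connection on a real metric calculus satisfying
Koszul's formula yields a pseudo-Riemannian calculus. -/
theorem koszul_implies_pseudoRiemannian
    {A : Type*} [Ring A] [StarRing A] [Algebra ℂ A]
    {M : Type*} [AddCommGroup M] [Module Aᵐᵒᵖ M]
    (h : M → M → A) (g : Set (A → A)) (φ : (A → A) → M)
    (cn : (A → A) → M → M)
    (Hrmc : RealMetricCalculus h g φ)
    (Hconn : IsAffineConnection g cn)
    (Hkoszul : ∀ d₁ ∈ g, ∀ d₂ ∈ g, ∀ d₃ ∈ g,
      2 * h (cn d₁ (φ d₂)) (φ d₃) =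
        d₁ (h (φ d₂) (φ d₃)) + d₂ (h (φ d₁) (φ d₃)) - d₃ (h (φ d₁) (φ d₂))
          - h (φ d₁) (φ (derComm d₂ d₃)) + h (φ d₂) (φ (derComm d₃ d₁))
          + h (φ d₃) (φ (derComm d₁ d₂))) :
    PseudoRiemannianCalculus h g φ cn :=  by
  have Hh := Hrmc.hermitianForm
  have Hg := Hrmc.lieAlg
  -- symmetry of h on the image of φ
  have hsym : ∀ {d d' : A → A}, d ∈ g → d' ∈ g →
      h (φ d) (φ d') = h (φ d') (φ d) := by
    intro d d' hd hd'
    rw [← Hrmc.herm_prod hd hd', Hh.star_h]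
  -- star-invariance of derivatives of self-adjoint elements
  have sder : ∀ {e : A → A}, e ∈ g → ∀ {b : A}, star b = b → star (e b) = e b := by
    intro e he b hb
    calc star (e b) = star (e (star b)) := by rw [hb]
      _ = star (star (e b)) := by rw [Hg.hermitian he b]
      _ = e b := star_star _
  -- reality of the connection coefficients
  have rc : ∀ {d d₁ d₂ : A → A}, d ∈ g → d₁ ∈ g → d₂ ∈ g →
      star (h (cn d (φ d₁)) (φ d₂)) = h (cn d (φ d₁)) (φ d₂) := by
    intro d d₁ d₂ hd h1 h2
    have k := Hkoszul d hd d₁ h1 d₂ h2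
    have hstar : star (2 * h (cn d (φ d₁)) (φ d₂)) = 2 * h (cn d (φ d₁)) (φ d₂) := by
      rw [k]
      simp only [star_add, star_sub]
      rw [sder hd (Hrmc.herm_prod h1 h2), sder h1 (Hrmc.herm_prod hd h2),
        sder h2 (Hrmc.herm_prod hd h1),
        Hrmc.herm_prod hd (Hg.bracket_mem h1 h2),
        Hrmc.herm_prod h1 (Hg.bracket_mem h2 hd),
        Hrmc.herm_prod h2 (Hg.bracket_mem hd h1)]
    rw [star_mul, star_ofNat, mul_two, ← two_mul] at hstar
    exact koszul_two_cancel hstar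
  -- the metric property on generators
  have base : ∀ {d d' d'' : A → A}, d ∈ g → d' ∈ g → d'' ∈ g →
      d (h (φ d') (φ d'')) =
        h (cn d (φ d')) (φ d'') + h (φ d') (cn d (φ d'')) := by
    intro d d' d'' hd hd' hd''
    have k1 := Hkoszul d hd d' hd' d'' hd''
    have k2 := Hkoszul d hd d'' hd'' d' hd'
    have e1 : h (φ d') (cn d (φ d'')) = h (cn d (φ d'')) (φ d') := by
      calc h (φ d') (cn d (φ d'')) = star (h (cn d (φ d'')) (φ d')) :=
            (Hh.star_h _ _).symm
        _ = _ := rc hd hd'' hd'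
    rw [e1]
    apply koszul_two_cancel
    rw [mul_add, k1, k2, hsym hd'' hd',
      koszul_phi_bracket_swap Hrmc hd' hd'',
      koszul_phi_bracket_swap Hrmc hd hd',
      koszul_phi_bracket_swap Hrmc hd'' hd]
    simp only [koszul_hf_neg_right Hh]
    rw [two_mul]
    abel
  -- the metric property with a generator on the left
  have stage1 : ∀ {d d' : A → A}, d ∈ g → d' ∈ g → ∀ V : M,
      d (h (φ d') V) = h (cn d (φ d')) V + h (φ d') (cn d V) := by
    intro d d' hd hd' V
    let S : Submodule Aᵐᵒᵖ M :=
      { carrier := {V | d (h (φ d') V) = h (cn d (φ d')) V + h (φ d') (cn d V)}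
        add_mem' := by
          intro x y hx hy
          simp only [Set.mem_setOf_eq] at hx hy ⊢
          rw [Hh.add_right, (Hg.isDerivation hd).map_add, Hconn.add_mod hd,
            Hh.add_right, Hh.add_right, hx, hy]
          abel
        zero_mem' := by
          simp only [Set.mem_setOf_eq]
          rw [koszul_hf_zero_right Hh, koszul_der_zero (Hg.isDerivation hd),
            koszul_cn_zero Hconn hd, koszul_hf_zero_right Hh,
            koszul_hf_zero_right Hh, add_zero]
        smul_mem' := by
          intro c x hx
          simp only [Set.mem_setOf_eq] at hx ⊢
          rw [← op_unop c, Hh.smul_right, (Hg.isDerivation hd).leibniz,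
            Hconn.leibniz hd, Hh.add_right, Hh.smul_right, Hh.smul_right,
            Hh.smul_right, hx, add_mul, add_assoc] }
    have hVmem : V ∈ Submodule.span Aᵐᵒᵖ (φ '' g) := by
      rw [Hrmc.generates]; trivial
    have hle : Submodule.span Aᵐᵒᵖ (φ '' g) ≤ S := by
      refine Submodule.span_le.mpr ?_
      rintro _ ⟨e, he, rfl⟩
      exact base hd hd' he
    exact hle hVmem
  -- the full metric property
  have metricP : ∀ {d : A → A}, d ∈ g → ∀ U V : M,
      d (h U V) = h (cn d U) V + h U (cn d V) := by
    intro d hd U V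
    let S : Submodule Aᵐᵒᵖ M :=
      { carrier := {U | ∀ V : M, d (h U V) = h (cn d U) V + h U (cn d V)}
        add_mem' := by
          intro x y hx hy V
          rw [Hh.add_left, (Hg.isDerivation hd).map_add, Hconn.add_mod hd,
            Hh.add_left, Hh.add_left, hx V, hy V]
          abel
        zero_mem' := by
          intro V
          rw [koszul_hf_zero_left Hh, koszul_der_zero (Hg.isDerivation hd),
            koszul_cn_zero Hconn hd, koszul_hf_zero_left Hh,
            koszul_hf_zero_left Hh, add_zero]
        smul_mem' := by
          intro c x hx V
          rw [← op_unop c, koszul_hf_smul_left Hh, (Hg.isDerivation hd).leibniz,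
            Hconn.leibniz hd, Hh.add_left, koszul_hf_smul_left Hh,
            koszul_hf_smul_left Hh, koszul_hf_smul_left Hh, hx V,
            Hg.hermitian hd, mul_add]
          abel }
    have hUmem : U ∈ Submodule.span Aᵐᵒᵖ (φ '' g) := by
      rw [Hrmc.generates]; trivial
    have hle : Submodule.span Aᵐᵒᵖ (φ '' g) ≤ S := by
      refine Submodule.span_le.mpr ?_
      rintro _ ⟨e, he, rfl⟩
      exact fun W => stage1 hd he W
    exact hle hUmem V
  -- torsion-freeness
  have tf : ∀ {d₁ d₂ : A → A}, d₁ ∈ g → d₂ ∈ g →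
      cn d₁ (φ d₂) - cn d₂ (φ d₁) - φ (derComm d₁ d₂) = 0 := by
    intro d₁ d₂ h1 h2
    set X := cn d₁ (φ d₂) - cn d₂ (φ d₁) - φ (derComm d₁ d₂) with hX
    have key : ∀ {d₃ : A → A}, d₃ ∈ g → h X (φ d₃) = 0 := by
      intro d₃ h3
      apply koszul_two_cancel
      rw [mul_zero, hX, koszul_hf_sub_left Hh, koszul_hf_sub_left Hh, mul_sub,
        mul_sub, Hkoszul d₁ h1 d₂ h2 d₃ h3, Hkoszul d₂ h2 d₁ h1 d₃ h3,
        hsym (Hg.bracket_mem h1 h2) h3, hsym h2 h1,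
        koszul_phi_bracket_swap Hrmc h3 h1,
        koszul_phi_bracket_swap Hrmc h2 h3,
        koszul_phi_bracket_swap Hrmc h1 h2]
      simp only [koszul_hf_neg_right Hh]
      rw [two_mul]
      abel
    have allV : ∀ V : M, h X V = 0 := by
      intro V
      let S : Submodule Aᵐᵒᵖ M :=
        { carrier := {V | h X V = 0}
          add_mem' := by
            intro x y hx hy
            simp only [Set.mem_setOf_eq] at hx hy ⊢
            rw [Hh.add_right, hx, hy, add_zero]
          zero_mem' := by
            simp only [Set.mem_setOf_eq]
            exact koszul_hf_zero_right Hh X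
          smul_mem' := by
            intro c x hx
            simp only [Set.mem_setOf_eq] at hx ⊢
            rw [← op_unop c, Hh.smul_right, hx, zero_mul] }
      have hVmem : V ∈ Submodule.span Aᵐᵒᵖ (φ '' g) := by
        rw [Hrmc.generates]; trivial
      have hle : Submodule.span Aᵐᵒᵖ (φ '' g) ≤ S := by
        refine Submodule.span_le.mpr ?_
        rintro _ ⟨e, he, rfl⟩
        exact key he
      exact hle hVmem
    exact Hrmc.nondegenerate X allV
  exact
    { toRealMetricCalculus := Hrmc
      isConnection := Hconn
      real_conn := fun hd h1 h2 => rc hd h1 h2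
      metric := fun hd U V => metricP hd U V
      torsionFree := fun h1 h2 => tf h1 h2 }
end

section
/- Let (M,h,g,φ,∇) be a pseudo-Riemannian calculus over a unital *-algebra A. Then the following two statements are equivalent: (1) h(∇_{d₁}∇_{d₂}E, E')* = h(∇_{d₁}∇_{d₂}E, E') for all d₁,d₂ ∈ g and E,E' in the image of φ; (2) h(∇_{d₁}E, ∇_{d₂}E')* = h(∇_{d₁}E, ∇_{d₂}E') for all d₁,d₂ ∈ g and E,E' in the image of φ. -/
open MulOpposite

/-- in a pseudo-Riemannian calculus, hermiticity of
`h(∇_{d₁}∇_{d₂}E, E')` on the image of `φ` is equivalent to hermiticity of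
`h(∇_{d₁}E, ∇_{d₂}E')` on the image of `φ`. -/
theorem second_order_hermitian_equiv
    {A : Type*} [Ring A] [StarRing A] [Algebra ℂ A]
    {M : Type*} [AddCommGroup M] [Module Aᵐᵒᵖ M]
    (h : M → M → A) (g : Set (A → A)) (φ : (A → A) → M)
    (cn : (A → A) → M → M)
    (H : PseudoRiemannianCalculus h g φ cn) :
    (∀ d₁ ∈ g, ∀ d₂ ∈ g, ∀ d ∈ g, ∀ d' ∈ g,
        star (h (cn d₁ (cn d₂ (φ d))) (φ d')) = h (cn d₁ (cn d₂ (φ d))) (φ d')) ↔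
      (∀ d₁ ∈ g, ∀ d₂ ∈ g, ∀ d ∈ g, ∀ d' ∈ g,
        star (h (cn d₁ (φ d)) (cn d₂ (φ d'))) = h (cn d₁ (φ d)) (cn d₂ (φ d'))) := by
  have key : ∀ d₁ ∈ g, ∀ d₂ ∈ g, ∀ d ∈ g, ∀ d' ∈ g,
      star (h (cn d₁ (cn d₂ (φ d))) (φ d')) + star (h (cn d₂ (φ d)) (cn d₁ (φ d'))) =
        h (cn d₁ (cn d₂ (φ d))) (φ d') + h (cn d₂ (φ d)) (cn d₁ (φ d')) := by
    intro d₁ h₁ d₂ h₂ d hd d' hd'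
    have hm := H.metric h₁ (cn d₂ (φ d)) (φ d')
    calc star (h (cn d₁ (cn d₂ (φ d))) (φ d')) + star (h (cn d₂ (φ d)) (cn d₁ (φ d')))
        = star (d₁ (h (cn d₂ (φ d)) (φ d'))) := by rw [hm, star_add, add_comm]
      _ = d₁ (star (h (cn d₂ (φ d)) (φ d'))) :=
          (H.toRealMetricCalculus.lieAlg.hermitian h₁ _).symm
      _ = d₁ (h (cn d₂ (φ d)) (φ d')) := by rw [H.real_conn h₂ hd hd']
      _ = _ := hm
  constructor
  · intro h1 d₁ h₁ d₂ h₂ d hd d' hd'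
    have k := key d₂ h₂ d₁ h₁ d hd d' hd'
    have e1 := h1 d₂ h₂ d₁ h₁ d hd d' hd'
    rw [e1] at k
    exact add_left_cancel k
  · intro h2 d₁ h₁ d₂ h₂ d hd d' hd'
    have k := key d₁ h₁ d₂ h₂ d hd d' hd'
    have e2 := h2 d₂ h₂ d₁ h₁ d hd d' hd'
    rw [e2] at k
    exact add_right_cancel k
end

section
/- Let (M,h,g,φ,∇) be a real pseudo-Riemannian calculus over a unital *-algebra A with curvature operator R(d₁,d₂)U = ∇_{d₁}∇_{d₂}U − ∇_{d₂}∇_{d₁}U − ∇_{[d₁,d₂]}U. Then for all d₁,d₂ ∈ g and all E₁,E₂ in the image of φ, h(E₁, R(d₁,d₂)E₂) = −h(E₂, R(d₁,d₂)E₁). In particular h(E, R(d₁,d₂)E) = 0 for all E in the image of φ. -/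
open MulOpposite

/-- A pseudo-Riemannian calculus is *real* if `h(∇_{d₁}∇_{d₂}E, E')` is
hermitian for all `d₁,d₂ ∈ g` and all `E, E'` in the image of `φ`. -/
def IsRealCalculus {A : Type*} [Ring A] [StarRing A] [Algebra ℂ A]
    {M : Type*} [AddCommGroup M] [Module Aᵐᵒᵖ M]
    (h : M → M → A) (g : Set (A → A)) (φ : (A → A) → M)
    (cn : (A → A) → M → M) : Prop :=
  ∀ d₁ ∈ g, ∀ d₂ ∈ g, ∀ d ∈ g, ∀ d' ∈ g,
    star (h (cn d₁ (cn d₂ (φ d))) (φ d')) = h (cn d₁ (cn d₂ (φ d))) (φ d')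

/-- in a real pseudo-Riemannian calculus,
`h(E₁, R(d₁,d₂)E₂) = −h(E₂, R(d₁,d₂)E₁)` on the image of `φ`; in particular
`h(E, R(d₁,d₂)E) = 0`. -/
theorem curvature_interchange_antisymmetry
    {A : Type*} [Ring A] [StarRing A] [Algebra ℂ A]
    {M : Type*} [AddCommGroup M] [Module Aᵐᵒᵖ M]
    (h : M → M → A) (g : Set (A → A)) (φ : (A → A) → M)
    (cn : (A → A) → M → M)
    (H : PseudoRiemannianCalculus h g φ cn)
    (Hreal : IsRealCalculus h g φ cn) :
    (∀ d₁ ∈ g, ∀ d₂ ∈ g, ∀ d ∈ g, ∀ d' ∈ g,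
        h (φ d) (curvatureOp cn d₁ d₂ (φ d')) =
          -h (φ d') (curvatureOp cn d₁ d₂ (φ d))) ∧
      (∀ d₁ ∈ g, ∀ d₂ ∈ g, ∀ d ∈ g,
        h (φ d) (curvatureOp cn d₁ d₂ (φ d)) = 0) := by
  have HF := H.toRealMetricCalculus.hermitianForm
  -- negation lemmas
  have hneg_right : ∀ U V : M, h U (-V) = -(h U V) := by
    intro U V
    have := HF.smul_right U V (-1)
    simpa [op_neg, op_one, mul_neg_one] using this
  have hneg_left : ∀ U V : M, h (-U) V = -(h U V) := by
    intro U V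
    have h1 : star (h (-U) V) = h V (-U) := HF.star_h _ _
    have h2 : h V (-U) = -(h V U) := hneg_right V U
    calc h (-U) V = star (star (h (-U) V)) := by rw [star_star]
      _ = star (-(h V U)) := by rw [h1, h2]
      _ = -(star (h V U)) := by rw [star_neg]
      _ = -(h U V) := by rw [HF.star_h]
  have hsub_right : ∀ U V W : M, h U (V - W) = h U V - h U W := by
    intro U V W
    rw [sub_eq_add_neg, HF.add_right, hneg_right, sub_eq_add_neg]
  have hsub_left : ∀ U V W : M, h (U - V) W = h U W - h V W := by
    intro U V W
    rw [sub_eq_add_neg, HF.add_left, hneg_left, sub_eq_add_neg]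
  -- the key identity: h(R E, F) + h(E, R F) = 0
  have key : ∀ d₁ ∈ g, ∀ d₂ ∈ g, ∀ d ∈ g, ∀ d' ∈ g,
      h (curvatureOp cn d₁ d₂ (φ d)) (φ d') +
        h (φ d) (curvatureOp cn d₁ d₂ (φ d')) = 0 := by
    intro d₁ hd₁ d₂ hd₂ d hd d' hd'
    set E := φ d
    set F := φ d'
    set c := derComm d₁ d₂ with hc
    have hcg : c ∈ g := H.toRealMetricCalculus.lieAlg.bracket_mem hd₁ hd₂
    have der₁ := H.toRealMetricCalculus.lieAlg.isDerivation hd₁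
    have der₂ := H.toRealMetricCalculus.lieAlg.isDerivation hd₂
    have h12 : d₁ (d₂ (h E F)) =
        h (cn d₁ (cn d₂ E)) F + h (cn d₂ E) (cn d₁ F) +
          (h (cn d₁ E) (cn d₂ F) + h E (cn d₁ (cn d₂ F))) := by
      rw [H.metric hd₂ E F, der₁.map_add, H.metric hd₁, H.metric hd₁]
    have h21 : d₂ (d₁ (h E F)) =
        h (cn d₂ (cn d₁ E)) F + h (cn d₁ E) (cn d₂ F) +
          (h (cn d₂ E) (cn d₁ F) + h E (cn d₂ (cn d₁ F))) := by
      rw [H.metric hd₁ E F, der₂.map_add, H.metric hd₂, H.metric hd₂]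
    have hcm : d₁ (d₂ (h E F)) - d₂ (d₁ (h E F)) =
        h (cn c E) F + h E (cn c F) := H.metric hcg E F
    rw [h12, h21] at hcm
    simp only [curvatureOp, hsub_left, hsub_right]
    rw [← hc]
    have hz : h (cn d₁ (cn d₂ E)) F + h (cn d₂ E) (cn d₁ F) +
          (h (cn d₁ E) (cn d₂ F) + h E (cn d₁ (cn d₂ F))) -
        (h (cn d₂ (cn d₁ E)) F + h (cn d₁ E) (cn d₂ F) +
          (h (cn d₂ E) (cn d₁ F) + h E (cn d₂ (cn d₁ F)))) -
        (h (cn c E) F + h E (cn c F)) = 0 := by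
      rw [hcm]; abel
    rw [← hz]; abel
  -- hermitian property of h(R E, F)
  have hermR : ∀ d₁ ∈ g, ∀ d₂ ∈ g, ∀ d ∈ g, ∀ d' ∈ g,
      star (h (curvatureOp cn d₁ d₂ (φ d)) (φ d')) =
        h (curvatureOp cn d₁ d₂ (φ d)) (φ d') := by
    intro d₁ hd₁ d₂ hd₂ d hd d' hd'
    have hcg : derComm d₁ d₂ ∈ g := H.toRealMetricCalculus.lieAlg.bracket_mem hd₁ hd₂
    simp only [curvatureOp, hsub_left, star_sub]
    rw [Hreal d₁ hd₁ d₂ hd₂ d hd d' hd', Hreal d₂ hd₂ d₁ hd₁ d hd d' hd',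
      H.real_conn hcg hd hd']
  have main : ∀ d₁ ∈ g, ∀ d₂ ∈ g, ∀ d ∈ g, ∀ d' ∈ g,
      h (φ d) (curvatureOp cn d₁ d₂ (φ d')) =
        -h (φ d') (curvatureOp cn d₁ d₂ (φ d)) := by
    intro d₁ hd₁ d₂ hd₂ d hd d' hd'
    have hk := key d₁ hd₁ d₂ hd₂ d hd d' hd'
    have hs : h (φ d') (curvatureOp cn d₁ d₂ (φ d)) =
        h (curvatureOp cn d₁ d₂ (φ d)) (φ d') := by
      rw [← HF.star_h, hermR d₁ hd₁ d₂ hd₂ d hd d' hd']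
    rw [hs]
    exact eq_neg_of_add_eq_zero_right hk
  refine ⟨main, fun d₁ hd₁ d₂ hd₂ d hd => ?_⟩
  have hx := main d₁ hd₁ d₂ hd₂ d hd d hd
  set x := h (φ d) (curvatureOp cn d₁ d₂ (φ d))
  have h2x : (2 : ℂ) • x = 0 := by
    rw [two_smul]
    exact add_eq_zero_iff_eq_neg.mpr hx
  calc x = ((2 : ℂ)⁻¹ * 2) • x := by norm_num
    _ = (2 : ℂ)⁻¹ • ((2 : ℂ) • x) := by rw [mul_smul]
    _ = 0 := by rw [h2x, smul_zero]
end

section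
/- Let (M,h,g,φ,∇) be a real pseudo-Riemannian calculus over a unital *-algebra A with curvature operator R(d₁,d₂)U = ∇_{d₁}∇_{d₂}U − ∇_{d₂}∇_{d₁}U − ∇_{[d₁,d₂]}U. Then for all d₁,d₂,d₃,d₄ ∈ g, h(φ(d₁), R(d₃,d₄)φ(d₂)) = h(φ(d₃), R(d₁,d₂)φ(d₄)). -/
open MulOpposite

section AuxLemmas
set_option linter.unusedSectionVars false

variable {A : Type*} [Ring A] [StarRing A] [Algebra ℂ A]
variable {M : Type*} [AddCommGroup M] [Module Aᵐᵒᵖ M]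

lemma IsDerivation.map_sub' {d : A → A} (hd : IsDerivation d) (a b : A) :
    d (a - b) = d a - d b :=
  map_sub (AddMonoidHom.mk' d hd.map_add) a b

lemma hsub_left {h : M → M → A} (HF : IsHermitianForm h) (U V W : M) :
    h (U - V) W = h U W - h V W :=
  map_sub (AddMonoidHom.mk' (fun U => h U W) (fun a b => HF.add_left a b W)) U V

lemma hsub_right {h : M → M → A} (HF : IsHermitianForm h) (U V W : M) :
    h U (V - W) = h U V - h U W :=
  map_sub (AddMonoidHom.mk' (h U) (HF.add_right U)) V W

lemma hneg_right {h : M → M → A} (HF : IsHermitianForm h) (U W : M) :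
    h U (-W) = -h U W :=
  map_neg (AddMonoidHom.mk' (h U) (HF.add_right U)) W

lemma hzero_right {h : M → M → A} (HF : IsHermitianForm h) (U : M) :
    h U 0 = 0 :=
  map_zero (AddMonoidHom.mk' (h U) (HF.add_right U))

lemma cn_sub {g : Set (A → A)} {cn : (A → A) → M → M} (C : IsAffineConnection g cn)
    {d : A → A} (hd : d ∈ g) (U V : M) : cn d (U - V) = cn d U - cn d V :=
  map_sub (AddMonoidHom.mk' (cn d) (C.add_mod hd)) U V

lemma phi_zero {h : M → M → A} {g : Set (A → A)} {φ : (A → A) → M}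
    (R : RealMetricCalculus h g φ) : φ (0 : A → A) = 0 := by
  have h0 : rSMul (0 : ℝ) (0 : A → A) = (0 : A → A) := by
    funext a; simp [rSMul]
  have := R.φ_smul 0 R.lieAlg.zero_mem
  rw [h0] at this
  simpa using this

end AuxLemmas
section MainLemmas
set_option linter.unusedSectionVars false

variable {A : Type*} [Ring A] [StarRing A] [Algebra ℂ A]
variable {M : Type*} [AddCommGroup M] [Module Aᵐᵒᵖ M]
variable {h : M → M → A} {g : Set (A → A)} {φ : (A → A) → M} {cn : (A → A) → M → M}

/-- Antisymmetry of the curvature operator in its two derivation arguments. -/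
lemma curv_antisym (H : PseudoRiemannianCalculus h g φ cn)
    {dc de : A → A} (hc : dc ∈ g) (he : de ∈ g) (U : M) :
    curvatureOp cn de dc U = -curvatureOp cn dc de U := by
  have hcomm : derComm de dc = rSMul (-1) (derComm dc de) := by
    funext a; simp [derComm, rSMul]
  have hs := H.isConnection.smul_der (-1) (H.toRealMetricCalculus.lieAlg.bracket_mem hc he) U
  have hs' : cn (derComm de dc) U = -cn (derComm dc de) U := by
    rw [hcomm, hs]
    simp
  simp only [curvatureOp, hs']
  abel

/-- Metric antisymmetry: `h(R(d₁,d₂)U, V) + h(U, R(d₁,d₂)V) = 0`. -/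
lemma curv_metric_antisym (H : PseudoRiemannianCalculus h g φ cn)
    {d₁ d₂ : A → A} (h1 : d₁ ∈ g) (h2 : d₂ ∈ g) (U V : M) :
    h (curvatureOp cn d₁ d₂ U) V + h U (curvatureOp cn d₁ d₂ V) = 0 := by
  have HF := H.toRealMetricCalculus.hermitianForm
  have LA := H.toRealMetricCalculus.lieAlg
  have he : derComm d₁ d₂ ∈ g := LA.bracket_mem h1 h2
  have e1 : d₁ (d₂ (h U V)) =
      h (cn d₁ (cn d₂ U)) V + h (cn d₂ U) (cn d₁ V) +
      (h (cn d₁ U) (cn d₂ V) + h U (cn d₁ (cn d₂ V))) := by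
    rw [H.metric h2 U V, (LA.isDerivation h1).map_add,
      H.metric h1 (cn d₂ U) V, H.metric h1 U (cn d₂ V)]
  have e2 : d₂ (d₁ (h U V)) =
      h (cn d₂ (cn d₁ U)) V + h (cn d₁ U) (cn d₂ V) +
      (h (cn d₂ U) (cn d₁ V) + h U (cn d₂ (cn d₁ V))) := by
    rw [H.metric h1 U V, (LA.isDerivation h2).map_add,
      H.metric h2 (cn d₁ U) V, H.metric h2 U (cn d₁ V)]
  have e3 : d₁ (d₂ (h U V)) - d₂ (d₁ (h U V)) =
      h (cn (derComm d₁ d₂) U) V + h U (cn (derComm d₁ d₂) V) := H.metric he U V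
  rw [e1, e2] at e3
  have e4 := sub_eq_zero.mpr e3
  simp only [curvatureOp, hsub_left HF, hsub_right HF]
  calc h (cn d₁ (cn d₂ U)) V - h (cn d₂ (cn d₁ U)) V - h (cn (derComm d₁ d₂) U) V +
        (h U (cn d₁ (cn d₂ V)) - h U (cn d₂ (cn d₁ V)) - h U (cn (derComm d₁ d₂) V))
      = h (cn d₁ (cn d₂ U)) V + h (cn d₂ U) (cn d₁ V) +
          (h (cn d₁ U) (cn d₂ V) + h U (cn d₁ (cn d₂ V))) -
        (h (cn d₂ (cn d₁ U)) V + h (cn d₁ U) (cn d₂ V) +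
          (h (cn d₂ U) (cn d₁ V) + h U (cn d₂ (cn d₁ V)))) -
        (h (cn (derComm d₁ d₂) U) V + h U (cn (derComm d₁ d₂) V)) := by abel
    _ = 0 := e4

/-- Reality: `h(φ d₁, R(d₃,d₄) φ d₂) = h(R(d₃,d₄) φ d₂, φ d₁)`. -/
lemma curv_swap (H : PseudoRiemannianCalculus h g φ cn)
    (Hreal : IsRealCalculus h g φ cn)
    {da db dc de : A → A} (ha : da ∈ g) (hb : db ∈ g) (hc : dc ∈ g) (he : de ∈ g) :
    h (φ da) (curvatureOp cn dc de (φ db)) = h (curvatureOp cn dc de (φ db)) (φ da) := by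
  have HF := H.toRealMetricCalculus.hermitianForm
  have hbr : derComm dc de ∈ g := H.toRealMetricCalculus.lieAlg.bracket_mem hc he
  rw [← HF.star_h (curvatureOp cn dc de (φ db)) (φ da)]
  simp only [curvatureOp, hsub_left HF, star_sub,
    Hreal dc hc de he db hb da ha, Hreal de he dc hc db hb da ha,
    H.real_conn hbr hb ha]

/-- First Bianchi identity. -/
lemma curv_bianchi (H : PseudoRiemannianCalculus h g φ cn)
    {d₁ d₂ d₃ : A → A} (h1 : d₁ ∈ g) (h2 : d₂ ∈ g) (h3 : d₃ ∈ g) :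
    curvatureOp cn d₁ d₂ (φ d₃) + curvatureOp cn d₂ d₃ (φ d₁) +
      curvatureOp cn d₃ d₁ (φ d₂) = 0 := by
  have LA := H.toRealMetricCalculus.lieAlg
  have C := H.isConnection
  have tf : ∀ {a b : A → A}, a ∈ g → b ∈ g →
      cn a (φ b) - cn b (φ a) = φ (derComm a b) := by
    intro a b ha hb
    have := H.torsionFree ha hb
    rw [sub_eq_zero] at this
    exact this
  have h12 : derComm d₁ d₂ ∈ g := LA.bracket_mem h1 h2
  have h23 : derComm d₂ d₃ ∈ g := LA.bracket_mem h2 h3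
  have h31 : derComm d₃ d₁ ∈ g := LA.bracket_mem h3 h1
  have g1 : cn d₁ (cn d₂ (φ d₃)) - cn d₁ (cn d₃ (φ d₂)) - cn (derComm d₂ d₃) (φ d₁) =
      φ (derComm d₁ (derComm d₂ d₃)) := by
    rw [← cn_sub C h1, tf h2 h3]; exact tf h1 h23
  have g2 : cn d₂ (cn d₃ (φ d₁)) - cn d₂ (cn d₁ (φ d₃)) - cn (derComm d₃ d₁) (φ d₂) =
      φ (derComm d₂ (derComm d₃ d₁)) := by
    rw [← cn_sub C h2, tf h3 h1]; exact tf h2 h31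
  have g3 : cn d₃ (cn d₁ (φ d₂)) - cn d₃ (cn d₂ (φ d₁)) - cn (derComm d₁ d₂) (φ d₃) =
      φ (derComm d₃ (derComm d₁ d₂)) := by
    rw [← cn_sub C h3, tf h1 h2]; exact tf h3 h12
  have jac : derComm d₁ (derComm d₂ d₃) + derComm d₂ (derComm d₃ d₁) +
      derComm d₃ (derComm d₁ d₂) = 0 := by
    funext a
    simp only [Pi.add_apply, Pi.zero_apply, derComm,
      (LA.isDerivation h1).map_sub', (LA.isDerivation h2).map_sub',
      (LA.isDerivation h3).map_sub']
    abel
  have φsum : φ (derComm d₁ (derComm d₂ d₃)) + φ (derComm d₂ (derComm d₃ d₁)) +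
      φ (derComm d₃ (derComm d₁ d₂)) = 0 := by
    have e1 : derComm d₁ (derComm d₂ d₃) ∈ g := LA.bracket_mem h1 h23
    have e2 : derComm d₂ (derComm d₃ d₁) ∈ g := LA.bracket_mem h2 h31
    have e3 : derComm d₃ (derComm d₁ d₂) ∈ g := LA.bracket_mem h3 h12
    rw [← H.toRealMetricCalculus.φ_add e1 e2, ← H.toRealMetricCalculus.φ_add (LA.add_mem e1 e2) e3, jac]
    exact phi_zero H.toRealMetricCalculus
  calc curvatureOp cn d₁ d₂ (φ d₃) + curvatureOp cn d₂ d₃ (φ d₁) +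
        curvatureOp cn d₃ d₁ (φ d₂)
      = (cn d₁ (cn d₂ (φ d₃)) - cn d₁ (cn d₃ (φ d₂)) - cn (derComm d₂ d₃) (φ d₁)) +
        (cn d₂ (cn d₃ (φ d₁)) - cn d₂ (cn d₁ (φ d₃)) - cn (derComm d₃ d₁) (φ d₂)) +
        (cn d₃ (cn d₁ (φ d₂)) - cn d₃ (cn d₂ (φ d₁)) - cn (derComm d₁ d₂) (φ d₃)) := by
        simp only [curvatureOp]; abel
    _ = φ (derComm d₁ (derComm d₂ d₃)) + φ (derComm d₂ (derComm d₃ d₁)) +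
        φ (derComm d₃ (derComm d₁ d₂)) := by rw [g1, g2, g3]
    _ = 0 := φsum

/-- Abstract pair-interchange from the three classical symmetries. -/
lemma pair_symm_abstract {G α : Type*} [AddCommGroup G] (T : α → α → α → α → G)
    (h2 : ∀ x y : G, x + x = y + y → x = y)
    (S1 : ∀ a b c d, T b a c d = -T a b c d)
    (S2 : ∀ a b c d, T a b d c = -T a b c d)
    (B : ∀ a b c d, T a b c d + T a c d b + T a d b c = 0)
    (a b c d : α) : T a b c d = T c d a b := by
  have key : ∀ a b c d : α, T a d b c = T b c a d := by
    intro a b c d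
    have B1 := B a b c d
    have B2 := B b c d a
    have B3 := B c d a b
    have B4 := B d a b c
    rw [S2 a c b d] at B1
    rw [S2 b c a d, S1 a b c d] at B2
    rw [S1 a c b d, S1 b c d a, S2 b c a d, neg_neg] at B3
    rw [S1 a d b c, S1 b d c a, S2 b d a c, neg_neg, S1 c d a b] at B4
    apply h2
    have E : (T a d b c + T a d b c) - (T b c a d + T b c a d) =
        ((T a b c d + -T a c b d + T a d b c) + (-T b c a d + T b d a c + -T a b c d))
        - ((T c d a b + -T a c b d + T b c a d) + (-T a d b c + T b d a c + -T c d a b)) := by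
      abel
    rw [B1, B2, B3, B4] at E
    norm_num at E
    exact sub_eq_zero.mp E
  exact key a c d b

end MainLemmas
/-- in a real pseudo-Riemannian calculus, the curvature satisfies
the pair-interchange symmetry
`h(φ(d₁), R(d₃,d₄)φ(d₂)) = h(φ(d₃), R(d₁,d₂)φ(d₄))`. -/
theorem curvature_pair_interchange
    {A : Type*} [Ring A] [StarRing A] [Algebra ℂ A]
    {M : Type*} [AddCommGroup M] [Module Aᵐᵒᵖ M]
    (h : M → M → A) (g : Set (A → A)) (φ : (A → A) → M)
    (cn : (A → A) → M → M)
    (H : PseudoRiemannianCalculus h g φ cn)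
    (Hreal : IsRealCalculus h g φ cn) :
    ∀ d₁ ∈ g, ∀ d₂ ∈ g, ∀ d₃ ∈ g, ∀ d₄ ∈ g,
      h (φ d₁) (curvatureOp cn d₃ d₄ (φ d₂)) =
        h (φ d₃) (curvatureOp cn d₁ d₂ (φ d₄)) := by
  intro d₁ hd₁ d₂ hd₂ d₃ hd₃ d₄ hd₄
  have HF := H.toRealMetricCalculus.hermitianForm
  -- The curvature four-tensor, defined on the subtype of derivations in `g`.
  set T : {x // x ∈ g} → {x // x ∈ g} → {x // x ∈ g} → {x // x ∈ g} → A :=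
    fun a b c e => h (φ a.1) (curvatureOp cn c.1 e.1 (φ b.1)) with hT
  have half : ∀ x y : A, x + x = y + y → x = y := by
    intro x y hxy
    have h2 : (2 : ℂ) • x = (2 : ℂ) • y := by rw [two_smul, two_smul]; exact hxy
    calc x = (2⁻¹ : ℂ) • ((2 : ℂ) • x) := by rw [smul_smul]; norm_num
      _ = (2⁻¹ : ℂ) • ((2 : ℂ) • y) := by rw [h2]
      _ = y := by rw [smul_smul]; norm_num
  have S1 : ∀ a b c e, T b a c e = -T a b c e := by
    intro a b c e
    have hA := curv_metric_antisym H c.2 e.2 (φ a.1) (φ b.1)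
    have hC := curv_swap H Hreal b.2 a.2 c.2 e.2
    simp only [hT]
    rw [hC]
    exact eq_neg_of_add_eq_zero_left hA
  have S2 : ∀ a b c e, T a b e c = -T a b c e := by
    intro a b c e
    simp only [hT]
    rw [curv_antisym H c.2 e.2 (φ b.1), hneg_right HF]
  have B : ∀ a b c e, T a b c e + T a c e b + T a e b c = 0 := by
    intro a b c e
    simp only [hT]
    rw [← HF.add_right, ← HF.add_right, curv_bianchi H c.2 e.2 b.2,
      hzero_right HF]
  exact pair_symm_abstract T half S1 S2 B ⟨d₁, hd₁⟩ ⟨d₂, hd₂⟩ ⟨d₃, hd₃⟩ ⟨d₄, hd₄⟩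
end

section
/- Let A be a unital *-algebra, h = (h_{ab}) an n×n matrix with entries in A, and (ĥ, H) a pseudo-inverse of h. Then H commutes with every entry of h and with every entry of ĥ: [h_{ab}, H] = 0 and [ĥ^{ab}, H] = 0 for all a,b. -/
/-- `(hh, H)` is a pseudo-inverse of the `n×n` matrix `h` with entries in a
unital `∗`-algebra `A`: `Σ_b ĥ^{ab} h_{bc} = Σ_b h_{cb} ĥ^{ba} = δ^a_c·H`,
where `H` is hermitian and regular (not a zero divisor). -/
def IsPseudoInverse {A : Type*} [Ring A] [StarRing A] {n : ℕ}
    (h hh : Fin n → Fin n → A) (H : A) : Prop :=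
  star H = H ∧
    (∀ a : A, H * a = 0 → a = 0) ∧ (∀ a : A, a * H = 0 → a = 0) ∧
    (∀ a c : Fin n, (∑ b, hh a b * h b c) = if a = c then H else 0) ∧
    (∀ a c : Fin n, (∑ b, h c b * hh b a) = if a = c then H else 0)

/-- `H` commutes with every entry of `h` and of `ĥ`. -/
theorem pseudoInverse_H_commutes
    {A : Type*} [Ring A] [StarRing A] {n : ℕ}
    (h hh : Fin n → Fin n → A) (H : A)
    (H1 : IsPseudoInverse h hh H) :
    (∀ a b : Fin n, h a b * H = H * h a b) ∧
      (∀ a b : Fin n, hh a b * H = H * hh a b) := by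
  obtain ⟨-, -, -, H4, H5⟩ := H1
  constructor
  · intro a e
    calc h a e * H
        = ∑ b, h a b * (if b = e then H else 0) := by simp
      _ = ∑ b, h a b * (∑ d, hh b d * h d e) := by simp_rw [H4]
      _ = ∑ d, (∑ b, h a b * hh b d) * h d e := by
          simp_rw [Finset.mul_sum, Finset.sum_mul, mul_assoc]
          exact Finset.sum_comm
      _ = ∑ d, (if d = a then H else 0) * h d e := by simp_rw [H5]
      _ = H * h a e := by simp
  · intro a e
    calc hh a e * H
        = ∑ b, hh a b * (if b = e then H else 0) := by simp
      _ = ∑ b, hh a b * (∑ d, h b d * hh d e) := by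
          have : ∀ b, (∑ d, h b d * hh d e) = if b = e then H else 0 := by
            intro b; rw [H5 e b]; simp [eq_comm]
          simp_rw [this]
      _ = ∑ d, (∑ b, hh a b * h b d) * hh d e := by
          simp_rw [Finset.mul_sum, Finset.sum_mul, mul_assoc]
          exact Finset.sum_comm
      _ = ∑ d, (if a = d then H else 0) * hh d e := by simp_rw [H4]
      _ = H * hh a e := by simp
end

section
/- Let A be a unital *-algebra, h = (h_{ab}) an n×n matrix with entries in A satisfying (h_{ab})* = h_{ba}, and (ĥ, H) a pseudo-inverse of h. Let R : {1,…,n}⁴ → A, written R_{abpq}, satisfy (R_{abpq})* = R_{abpq}, R_{abpq} = −R_{abqp}, R_{abpq} = −R_{bapq}, and R_{abpq} = R_{pqab} for all indices. Then: (1) if S, S' ∈ A satisfy H·S·H = Σ_{a,b,p,q} ĥ^{ab} R_{apbq} ĥ^{pq} = H·S'·H, then S = S'; and (2) any such S is hermitian, S* = S. -/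
/-- the scalar curvature with respect to a pseudo-inverse
`(ĥ, H)` is unique and hermitian. -/
theorem scalar_curvature_unique_and_hermitian
    {A : Type*} [Ring A] [StarRing A] {n : ℕ}
    (h hh : Fin n → Fin n → A) (H : A)
    (hsym : ∀ a b : Fin n, star (h a b) = h b a)
    (H1 : IsPseudoInverse h hh H)
    (R : Fin n → Fin n → Fin n → Fin n → A)
    (hR_herm : ∀ a b p q, star (R a b p q) = R a b p q)
    (hR_anti1 : ∀ a b p q, R a b p q = -R a b q p)
    (hR_anti2 : ∀ a b p q, R a b p q = -R b a p q)
    (hR_pair : ∀ a b p q, R a b p q = R p q a b) :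
    (∀ S S' : A,
        H * S * H = (∑ a, ∑ b, ∑ p, ∑ q, hh a b * R a p b q * hh p q) →
        H * S' * H = (∑ a, ∑ b, ∑ p, ∑ q, hh a b * R a p b q * hh p q) →
        S = S') ∧
      (∀ S : A,
        H * S * H = (∑ a, ∑ b, ∑ p, ∑ q, hh a b * R a p b q * hh p q) →
        star S = S) := by
  obtain ⟨hH, hL, hRr, hInv1, hInv2⟩ := H1
  -- uniqueness
  have huniq : ∀ S S' : A,
      H * S * H = (∑ a, ∑ b, ∑ p, ∑ q, hh a b * R a p b q * hh p q) →
      H * S' * H = (∑ a, ∑ b, ∑ p, ∑ q, hh a b * R a p b q * hh p q) →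
      S = S' := by
    intro S S' e1 e2
    have h0 : H * (S - S') * H = 0 := by
      rw [mul_sub, sub_mul, e1, e2, sub_self]
    have h1 : (S - S') * H = 0 := hL _ (by rw [← mul_assoc]; exact h0)
    have h2 : S - S' = 0 := hRr _ h1
    exact sub_eq_zero.mp h2
  refine ⟨huniq, ?_⟩
  -- star of hh
  have hhstar : ∀ a b : Fin n, star (hh a b) = hh b a := by
    intro a b
    have key : ∀ c, (∑ e, h c e * (star (hh a e) - hh e a)) = 0 := by
      intro c
      have e1 : (∑ e, h c e * star (hh a e)) = if a = c then H else 0 := by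
        have := congrArg star (hInv1 a c)
        rw [star_sum] at this
        simp only [star_mul, hsym, apply_ite star, hH, star_zero] at this
        exact this
      have e2 := hInv2 a c
      simp [mul_sub, Finset.sum_sub_distrib, e1, e2]
    have hX : H * (star (hh a b) - hh b a) = 0 := by
      have step : (∑ c, (if b = c then H else 0) * (star (hh a c) - hh c a))
          = ∑ d, hh b d * ∑ c, h d c * (star (hh a c) - hh c a) := by
        simp_rw [Finset.mul_sum, ← mul_assoc]
        rw [Finset.sum_comm]
        refine Finset.sum_congr rfl fun c _ => ?_
        rw [← Finset.sum_mul, hInv1 b c]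
      simp only [key, mul_zero, Finset.sum_const_zero] at step
      simp only [ite_mul, zero_mul, Finset.sum_ite_eq, Finset.mem_univ, if_true] at step
      exact step
    have := hL _ hX
    exact sub_eq_zero.mp this
  -- key R symmetry
  have hRkey : ∀ a b p q, R q b p a = R a p b q := by
    intro a b p q
    rw [hR_pair, hR_anti2, hR_anti1, neg_neg]
  -- reversal of quadruple sums
  have swap4 : ∀ g : Fin n → Fin n → Fin n → Fin n → A,
      (∑ a, ∑ b, ∑ p, ∑ q, g a b p q) = ∑ a, ∑ b, ∑ p, ∑ q, g q p b a := by
    intro g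
    have e1 : (∑ a, ∑ b, ∑ p, ∑ q, g a b p q)
        = ∑ x : Fin n × Fin n × Fin n × Fin n, g x.1 x.2.1 x.2.2.1 x.2.2.2 := by
      simp [Fintype.sum_prod_type]
    have e2 : (∑ a, ∑ b, ∑ p, ∑ q, g q p b a)
        = ∑ x : Fin n × Fin n × Fin n × Fin n, g x.2.2.2 x.2.2.1 x.2.1 x.1 := by
      simp [Fintype.sum_prod_type]
    rw [e1, e2]
    exact Fintype.sum_equiv
      ⟨fun x => (x.2.2.2, x.2.2.1, x.2.1, x.1),
       fun x => (x.2.2.2, x.2.2.1, x.2.1, x.1),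
       fun x => rfl, fun x => rfl⟩ _ _ (fun x => rfl)
  -- the sum is hermitian
  have hstarS : star (∑ a, ∑ b, ∑ p, ∑ q, hh a b * R a p b q * hh p q)
      = ∑ a, ∑ b, ∑ p, ∑ q, hh a b * R a p b q * hh p q := by
    rw [star_sum]
    simp only [star_sum, star_mul, hhstar, hR_herm]
    rw [swap4 (fun a b p q => hh q p * (R a p b q * hh b a))]
    refine Finset.sum_congr rfl fun a _ => Finset.sum_congr rfl fun b _ =>
      Finset.sum_congr rfl fun p _ => Finset.sum_congr rfl fun q _ => ?_
    simp only [hRkey, mul_assoc]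
  intro S e
  refine huniq (star S) S ?_ e
  calc H * star S * H = star (H * S * H) := by
        simp only [star_mul, hH, mul_assoc]
      _ = _ := by rw [e, hstarS]
end

section
/- Let A be a unital *-algebra, h = (h_{ab}) an n×n matrix with entries in A, and let (ĥ, H) and (ĝ, G) be two pseudo-inverses of h with H central in A. Let R_{abpq} ∈ A (a,b,p,q ∈ {1,…,n}) be any family of elements, and suppose S, S' ∈ A satisfy H·S·H = Σ_{a,b,p,q} ĥ^{ab} R_{apbq} ĥ^{pq} and G·S'·G = Σ_{a,b,p,q} ĝ^{ab} R_{apbq} ĝ^{pq}. Then S = S'. -/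
/-- if `H` is central, the scalar curvature does not depend on
the choice of pseudo-inverse. -/
theorem scalar_curvature_independent_of_pseudoInverse
    {A : Type*} [Ring A] [StarRing A] {n : ℕ}
    (h hh gg : Fin n → Fin n → A) (H G : A)
    (H1 : IsPseudoInverse h hh H) (H2 : IsPseudoInverse h gg G)
    (Hcentral : ∀ a : A, H * a = a * H)
    (R : Fin n → Fin n → Fin n → Fin n → A)
    (S S' : A)
    (hS : H * S * H = (∑ a, ∑ b, ∑ p, ∑ q, hh a b * R a p b q * hh p q))
    (hS' : G * S' * G = (∑ a, ∑ b, ∑ p, ∑ q, gg a b * R a p b q * gg p q)) :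
    S = S' := by
  obtain ⟨_, HL, HR, HP4, HP5⟩ := H1
  obtain ⟨_, Gl, Gr, GP4, GP5⟩ := H2
  -- key identity 1 : G * hh a b = gg a b * H
  have key1 : ∀ a b : Fin n, G * hh a b = gg a b * H := by
    intro a b
    have : ∑ c, ∑ d, gg a c * h c d * hh d b
        = ∑ d, ∑ c, gg a c * h c d * hh d b := Finset.sum_comm
    calc G * hh a b = ∑ d, (if a = d then G else 0) * hh d b := by
          simp [ite_mul]
      _ = ∑ d, (∑ c, gg a c * h c d) * hh d b := by
          simp only [GP4]
      _ = ∑ d, ∑ c, gg a c * h c d * hh d b := by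
          simp [Finset.sum_mul]
      _ = ∑ c, ∑ d, gg a c * h c d * hh d b := Finset.sum_comm
      _ = ∑ c, gg a c * (∑ d, h c d * hh d b) := by
          simp [Finset.mul_sum, mul_assoc]
      _ = ∑ c, gg a c * (if b = c then H else 0) := by
          simp only [HP5]
      _ = gg a b * H := by simp [mul_ite, Finset.sum_ite_eq]
  -- key identity 2 : hh a b * G = H * gg a b
  have key2 : ∀ a b : Fin n, hh a b * G = H * gg a b := by
    intro a b
    calc hh a b * G = ∑ d, hh a d * (if b = d then G else 0) := by
          simp [mul_ite, Finset.sum_ite_eq]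
      _ = ∑ d, hh a d * (∑ c, h d c * gg c b) := by simp only [GP5]
      _ = ∑ d, ∑ c, hh a d * h d c * gg c b := by
          simp [Finset.mul_sum, mul_assoc]
      _ = ∑ c, ∑ d, hh a d * h d c * gg c b := Finset.sum_comm
      _ = ∑ c, (∑ d, hh a d * h d c) * gg c b := by simp [Finset.sum_mul]
      _ = ∑ c, (if a = c then H else 0) * gg c b := by simp only [HP4]
      _ = H * gg a b := by simp [Finset.sum_ite_eq]
  -- main computation
  have main : H * (G * S * G) * H = H * (G * S' * G) * H := by
    have lhs : G * (H * S * H) * G = H * (G * S * G) * H := by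
      simp only [← mul_assoc]
      rw [Hcentral G, mul_assoc (G * H * S) H G, mul_assoc (G * H * S) G H,
        Hcentral G]
    have rhs : G * (H * S * H) * G = H * (G * S' * G) * H := by
      rw [hS, hS']
      rw [Finset.mul_sum, Finset.sum_mul, Finset.mul_sum, Finset.sum_mul]
      refine Finset.sum_congr rfl fun a _ => ?_
      rw [Finset.mul_sum, Finset.sum_mul, Finset.mul_sum, Finset.sum_mul]
      refine Finset.sum_congr rfl fun b _ => ?_
      rw [Finset.mul_sum, Finset.sum_mul, Finset.mul_sum, Finset.sum_mul]
      refine Finset.sum_congr rfl fun p _ => ?_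
      rw [Finset.mul_sum, Finset.sum_mul, Finset.mul_sum, Finset.sum_mul]
      refine Finset.sum_congr rfl fun q _ => ?_
      calc G * (hh a b * R a p b q * hh p q) * G
          = (G * hh a b) * R a p b q * (hh p q * G) := by noncomm_ring
        _ = (gg a b * H) * R a p b q * (H * gg p q) := by rw [key1, key2]
        _ = H * (gg a b * R a p b q * gg p q) * H := by
            rw [← Hcentral (gg a b), Hcentral (gg p q)]
            simp only [mul_assoc]
    rw [← lhs, rhs]
  -- cancel H twice
  have e1 : G * S * G * H = G * S' * G * H := by
    apply sub_eq_zero.mp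
    apply HL
    rw [mul_sub, show H * (G * S * G * H) = H * (G * S * G) * H by noncomm_ring,
      show H * (G * S' * G * H) = H * (G * S' * G) * H by noncomm_ring, main, sub_self]
  have c1 : G * S * G = G * S' * G := by
    apply sub_eq_zero.mp
    apply HR
    rw [sub_mul, e1, sub_self]
  -- cancel G twice
  have c2 : S * G = S' * G := by
    apply sub_eq_zero.mp
    apply Gl
    rw [mul_sub, show G * (S * G) = G * S * G by noncomm_ring,
      show G * (S' * G) = G * S' * G by noncomm_ring, c1, sub_self]
  apply sub_eq_zero.mp
  apply Gr
  rw [sub_mul, c2, sub_self]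
end

section
/- Let A be a unital *-algebra over ℂ with unitary elements Z, W (Z·Z* = Z*·Z = 1, W·W* = W*·W = 1) satisfying W·Z = q·Z·W with q = e^{2πiθ}. Define X¹ = (Z+Z*)/2, X² = (Z−Z*)/(2i), X³ = (W+W*)/2, X⁴ = (W−W*)/(2i), and consider the elements of the free right A-module A⁴: E₁ = (−X², X¹, 0, 0) and E₂ = (0, 0, −X⁴, X³). Then: (1) E₁ and E₂ are right A-linearly independent, i.e. E₁·a + E₂·b = 0 implies a = b = 0; and (2) the hermitian form h on the submodule M generated by E₁, E₂ defined by h(E₁a¹ + E₂a², E₁b¹ + E₂b²) = (a¹)*b¹ + (a²)*b² is nondegenerate: if U ∈ M and h(U, V) = 0 for all V ∈ M, then U = 0. -/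
lemma aux_zero_of_parts {A : Type*} [Ring A] [StarRing A] [Algebra ℂ A]
    (Z : A) (hZ : star Z * Z = 1) (X₁ X₂ : A)
    (hX₁ : X₁ = ((2 : ℂ)⁻¹) • (Z + star Z))
    (hX₂ : X₂ = ((2 * Complex.I)⁻¹) • (Z - star Z))
    (a : A) (h1 : X₁ * a = 0) (h2 : X₂ * a = 0) : a = 0 := by
  have hZa : Z * a = 0 := by
    have hsum : X₁ + Complex.I • X₂ = Z := by
      rw [hX₁, hX₂, smul_smul]
      have : Complex.I * (2 * Complex.I)⁻¹ = (2 : ℂ)⁻¹ := by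
        rw [mul_inv, mul_comm, mul_assoc, Complex.inv_I]
        simp
      rw [this, ← smul_add]
      have : Z + star Z + (Z - star Z) = (2 : ℂ) • Z := by
        rw [two_smul]; abel
      rw [this, smul_smul]
      norm_num
    calc Z * a = (X₁ + Complex.I • X₂) * a := by rw [hsum]
    _ = X₁ * a + Complex.I • (X₂ * a) := by rw [add_mul, smul_mul_assoc]
    _ = 0 := by rw [h1, h2, smul_zero, add_zero]
  calc a = (star Z * Z) * a := by rw [hZ, one_mul]
  _ = star Z * (Z * a) := by rw [mul_assoc]
  _ = 0 := by rw [hZa, mul_zero]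

/-- for the noncommutative torus, `E₁ = (−X²,X¹,0,0)` and
`E₂ = (0,0,−X⁴,X³)` are right-`A`-linearly independent in `A⁴`, and the
hermitian form `h(E₁a¹+E₂a², E₁b¹+E₂b²) = (a¹)*b¹ + (a²)*b²` on the submodule
they generate is nondegenerate. -/
theorem torus_free_metric_module
    {A : Type*} [Ring A] [StarRing A] [Algebra ℂ A] [StarModule ℂ A]
    (θ : ℝ) (q : ℂ) (hq : q = Complex.exp (2 * (Real.pi : ℂ) * Complex.I * (θ : ℂ)))
    (Z W : A)
    (hZunit : Z * star Z = 1) (hZunit' : star Z * Z = 1)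
    (hWunit : W * star W = 1) (hWunit' : star W * W = 1)
    (hq_rel : W * Z = q • (Z * W))
    (X₁ X₂ X₃ X₄ : A)
    (hX₁ : X₁ = ((2 : ℂ)⁻¹) • (Z + star Z))
    (hX₂ : X₂ = ((2 * Complex.I)⁻¹) • (Z - star Z))
    (hX₃ : X₃ = ((2 : ℂ)⁻¹) • (W + star W))
    (hX₄ : X₄ = ((2 * Complex.I)⁻¹) • (W - star W))
    (E₁ E₂ : Fin 4 → A)
    (hE₁ : E₁ = ![-X₂, X₁, 0, 0])
    (hE₂ : E₂ = ![0, 0, -X₄, X₃]) :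
    -- (1) `E₁, E₂` are right `A`-linearly independent:
    (∀ a b : A, (fun i => E₁ i * a + E₂ i * b) = (0 : Fin 4 → A) → a = 0 ∧ b = 0) ∧
      -- (2) the hermitian form `h` is nondegenerate on the module generated by
      -- `E₁, E₂`: if `U = E₁a¹ + E₂a²` pairs to zero with every `V = E₁b¹ + E₂b²`,
      -- then `U = 0`:
      (∀ a₁ a₂ : A,
        (∀ b₁ b₂ : A, star a₁ * b₁ + star a₂ * b₂ = 0) →
        (fun i => E₁ i * a₁ + E₂ i * a₂) = (0 : Fin 4 → A)) := by
  constructor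
  · intro a b h
    have h0 := congrFun h 0
    have h1 := congrFun h 1
    have h2 := congrFun h 2
    have h3 := congrFun h 3
    simp [hE₁, hE₂, neg_mul] at h0 h1 h2 h3
    exact ⟨aux_zero_of_parts Z hZunit' X₁ X₂ hX₁ hX₂ a h1 h0,
      aux_zero_of_parts W hWunit' X₃ X₄ hX₃ hX₄ b h3 h2⟩
  · intro a₁ a₂ h
    have h1 := h 1 0
    have h2 := h 0 1
    simp at h1 h2
    have ha₁ : a₁ = 0 := by
      have := congrArg star h1
      simpa using this
    have ha₂ : a₂ = 0 := by
      have := congrArg star h2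
      simpa using this
    funext i
    simp [ha₁, ha₂]
end

section
/- Let A be a unital *-algebra over ℂ and let Z, W ∈ A satisfy the relations of the noncommutative 3-sphere: W·Z = q·Z·W, W*·Z = q̄·Z·W*, W·Z* = q̄·Z*·W, W*·Z* = q·Z*·W*, Z*·Z = Z·Z*, W*·W = W·W*, and W·W* = 1 − Z·Z*, with q = e^{2πiθ}. Assume moreover that Z·Z* and W·W* are regular (not zero divisors): (ZZ*)·a = 0 implies a = 0 and (WW*)·a = 0 implies a = 0. Define X¹ = (Z+Z*)/2, X² = (Z−Z*)/(2i), X³ = (W+W*)/2, X⁴ = (W−W*)/(2i), |Z|² = ZZ*, |W|² = WW*, and the elements of A⁴: E₁ = (−X², X¹, 0, 0), E₂ = (0, 0, −X⁴, X³), E₃ = (X¹|W|², X²|W|², −X³|Z|², −X⁴|Z|²). Then E₁, E₂, E₃ are right A-linearly independent: E₁·a + E₂·b + E₃·c = 0 implies a = b = c = 0; hence the right A-submodule of A⁴ they generate is free with basis {E₁, E₂, E₃}. -/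
/-- in the noncommutative 3-sphere (with `ZZ*`, `WW*` regular),
the elements `E₁, E₂, E₃` of `A⁴` are right-`A`-linearly independent, so the
submodule they generate is free with basis `{E₁,E₂,E₃}`. -/
theorem sphere_tangent_module_free
    {A : Type*} [Ring A] [StarRing A] [Algebra ℂ A] [StarModule ℂ A]
    (θ : ℝ) (q : ℂ) (hq : q = Complex.exp (2 * (Real.pi : ℂ) * Complex.I * (θ : ℂ)))
    (Z W : A)
    (h1 : W * Z = q • (Z * W))
    (h2 : star W * Z = (starRingEnd ℂ q) • (Z * star W))
    (h3 : W * star Z = (starRingEnd ℂ q) • (star Z * W))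
    (h4 : star W * star Z = q • (star Z * star W))
    (h5 : star Z * Z = Z * star Z)
    (h6 : star W * W = W * star W)
    (h7 : W * star W = 1 - Z * star Z)
    (hZreg : ∀ a : A, Z * star Z * a = 0 → a = 0)
    (hWreg : ∀ a : A, W * star W * a = 0 → a = 0)
    (X₁ X₂ X₃ X₄ : A)
    (hX₁ : X₁ = ((2 : ℂ)⁻¹) • (Z + star Z))
    (hX₂ : X₂ = ((2 * Complex.I)⁻¹) • (Z - star Z))
    (hX₃ : X₃ = ((2 : ℂ)⁻¹) • (W + star W))
    (hX₄ : X₄ = ((2 * Complex.I)⁻¹) • (W - star W))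
    (E₁ E₂ E₃ : Fin 4 → A)
    (hE₁ : E₁ = ![-X₂, X₁, 0, 0])
    (hE₂ : E₂ = ![0, 0, -X₄, X₃])
    (hE₃ : E₃ = ![X₁ * (W * star W), X₂ * (W * star W),
      -(X₃ * (Z * star Z)), -(X₄ * (Z * star Z))]) :
    ∀ a b c : A,
      (fun i => E₁ i * a + E₂ i * b + E₃ i * c) = (0 : Fin 4 → A) →
      a = 0 ∧ b = 0 ∧ c = 0 := by
  intro a b c h
  have hZstar : X₁ - Complex.I • X₂ = star Z := by
    rw [hX₁, hX₂]; match_scalars <;> field_simp <;> ring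
  have hWstar : X₃ - Complex.I • X₄ = star W := by
    rw [hX₃, hX₄]; match_scalars <;> field_simp <;> ring
  have hWeq : X₃ + Complex.I • X₄ = W := by
    rw [hX₃, hX₄]; match_scalars <;> field_simp <;> ring
  have e0 := congrFun h 0
  have e1 := congrFun h 1
  have e2 := congrFun h 2
  have e3 := congrFun h 3
  simp only [hE₁, hE₂, hE₃, Matrix.cons_val_zero, Matrix.cons_val_one, Matrix.head_cons,
    Matrix.cons_val_two, Matrix.tail_cons, Matrix.cons_val_three, Pi.zero_apply,
    zero_mul, add_zero, zero_add, neg_mul, neg_neg, neg_add_eq_zero,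
    add_eq_zero_iff_eq_neg] at e0 e1 e2 e3
  -- e0 : X₂ * a = X₁ * (W * star W) * c
  -- e1 : X₁ * a = -(X₂ * (W * star W) * c)
  -- e2 : -(X₄ * b) = X₃ * (Z * star Z) * c
  -- e3 : X₃ * b = X₄ * (Z * star Z) * c
  have g2 : X₄ * b = -(X₃ * (Z * star Z * c)) := by
    rw [← mul_assoc, ← e2, neg_neg]
  have g3 : X₃ * b = X₄ * (Z * star Z * c) := by
    rw [← mul_assoc]; exact e3
  have A1 : star W * (b - Complex.I • (Z * star Z * c)) = 0 := by
    rw [← hWstar]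
    simp only [sub_mul, mul_sub, smul_mul_assoc, mul_smul_comm, smul_smul, smul_sub,
      Complex.I_mul_I, neg_one_smul, smul_neg]
    rw [g2, g3]
    module
  have B1 : W * (b + Complex.I • (Z * star Z * c)) = 0 := by
    rw [← hWeq]
    simp only [add_mul, mul_add, smul_mul_assoc, mul_smul_comm, smul_smul, smul_add,
      Complex.I_mul_I, neg_one_smul, smul_neg]
    rw [g2, g3]
    module
  have hb1 : b - Complex.I • (Z * star Z * c) = 0 :=
    hWreg _ (by rw [mul_assoc, A1, mul_zero])
  have hb2 : b + Complex.I • (Z * star Z * c) = 0 :=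
    hWreg _ (by rw [← h6, mul_assoc, B1, mul_zero])
  rw [sub_eq_zero] at hb1
  have h2sc : ((2 : ℂ) * Complex.I) • (Z * star Z * c) = 0 := by
    have h' := hb2
    rw [hb1, ← two_smul ℂ, smul_smul] at h'
    exact h'
  have hsc : Z * star Z * c = 0 :=
    (smul_eq_zero.mp h2sc).resolve_left (mul_ne_zero two_ne_zero Complex.I_ne_zero)
  have hc : c = 0 := hZreg c hsc
  have hb : b = 0 := by rw [hb1, hsc, smul_zero]
  subst hc
  simp only [mul_zero, neg_zero, neg_eq_zero] at e0 e1
  -- e0 : X₂ * a = 0, e1 : X₁ * a = 0 (after mul_zero)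
  have ha1 : star Z * a = 0 := by
    rw [← hZstar, sub_mul, smul_mul_assoc, e0, e1, smul_zero, sub_zero]
  have ha : a = 0 := hZreg a (by rw [mul_assoc, ha1, mul_zero])
  exact ⟨ha, hb, rfl⟩
end

section
/- Let A be a unital *-algebra over ℂ and let Z, W ∈ A satisfy the relations of the noncommutative 3-sphere: W·Z = q·Z·W, W*·Z = q̄·Z·W*, W·Z* = q̄·Z*·W, W*·Z* = q·Z*·W*, Z*·Z = Z·Z*, W*·W = W·W*, and W·W* = 1 − Z·Z*, with q = e^{2πiθ}. Define X¹ = (Z+Z*)/2, X² = (Z−Z*)/(2i), X³ = (W+W*)/2, X⁴ = (W−W*)/(2i), and let P : A⁴ → A⁴ act on U = (U¹,U²,U³,U⁴) by P(U)^i = U^i − Σ_j X^i X^j U^j. Consider F₁ = (−X⁴, X³, −qX², qX¹), F₂ = (−X³, −X⁴, qX¹, qX²), F₃ = (−X², X¹, X⁴, −X³) in A⁴. Then: (1) Σ_i X^i F_a^i = 0 for a = 1,2,3, so P(F_a) = F_a; (2) F₁, F₂, F₃ are right A-linearly independent: F₁·a + F₂·b + F₃·c = 0 implies a = b = c = 0;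 and (3) the image P(A⁴) equals the right A-submodule generated by F₁, F₂, F₃; in particular P(e₁) = −F₁X⁴ − F₂X³ − F₃X², P(e₂) = F₁X³ − F₂X⁴ + F₃X¹, P(e₃) = −q̄F₁X² + q̄F₂X¹ + F₃X⁴, P(e₄) = q̄F₁X¹ + q̄F₂X² − F₃X³, where e₁,…,e₄ is the canonical basis of A⁴. Hence P(A⁴) is a free right A-module with basis {F₁, F₂, F₃}. -/
private lemma expand4 {A : Type*} [Ring A]
    (u0 u1 u2 u3 p0 p1 p2 p3 v0 v1 v2 v3 r0 r1 r2 r3 a b c : A) :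
    u0*(p0*a + v0*b + r0*c) + u1*(p1*a + v1*b + r1*c) + u2*(p2*a + v2*b + r2*c) +
      u3*(p3*a + v3*b + r3*c)
    = (u0*p0+u1*p1+u2*p2+u3*p3)*a + (u0*v0+u1*v1+u2*v2+u3*v3)*b +
      (u0*r0+u1*r1+u2*r2+u3*r3)*c := by
  noncomm_ring

set_option maxHeartbeats 4000000 in
/-- the noncommutative tangent module `TS³_θ = P(A⁴)` of the
noncommutative 3-sphere is a free right `A`-module with basis `{F₁,F₂,F₃}`. -/
theorem sphere_parallelizable
    {A : Type*} [Ring A] [StarRing A] [Algebra ℂ A] [StarModule ℂ A]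
    (θ : ℝ) (q : ℂ) (hq : q = Complex.exp (2 * (Real.pi : ℂ) * Complex.I * (θ : ℂ)))
    (Z W : A)
    (h1 : W * Z = q • (Z * W))
    (h2 : star W * Z = (starRingEnd ℂ q) • (Z * star W))
    (h3 : W * star Z = (starRingEnd ℂ q) • (star Z * W))
    (h4 : star W * star Z = q • (star Z * star W))
    (h5 : star Z * Z = Z * star Z)
    (h6 : star W * W = W * star W)
    (h7 : W * star W = 1 - Z * star Z)
    (X₁ X₂ X₃ X₄ : A)
    (hX₁ : X₁ = ((2 : ℂ)⁻¹) • (Z + star Z))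
    (hX₂ : X₂ = ((2 * Complex.I)⁻¹) • (Z - star Z))
    (hX₃ : X₃ = ((2 : ℂ)⁻¹) • (W + star W))
    (hX₄ : X₄ = ((2 * Complex.I)⁻¹) • (W - star W))
    (Xv : Fin 4 → A) (hXv : Xv = ![X₁, X₂, X₃, X₄])
    -- `P` is the projection onto the tangent module, `P(U)^i = U^i − Σ_j X^i X^j U^j`:
    (P : (Fin 4 → A) → (Fin 4 → A))
    (hP : ∀ (U : Fin 4 → A) (i : Fin 4), P U i = U i - ∑ j, Xv i * Xv j * U j)
    (F₁ F₂ F₃ : Fin 4 → A)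
    (hF₁ : F₁ = ![-X₄, X₃, -(q • X₂), q • X₁])
    (hF₂ : F₂ = ![-X₃, -X₄, q • X₁, q • X₂])
    (hF₃ : F₃ = ![-X₂, X₁, X₄, -X₃]) :
    -- (1) `Σ_i X^i F_a^i = 0`, hence `P(F_a) = F_a`:
    ((∑ i, Xv i * F₁ i) = 0 ∧ (∑ i, Xv i * F₂ i) = 0 ∧ (∑ i, Xv i * F₃ i) = 0) ∧
      (P F₁ = F₁ ∧ P F₂ = F₂ ∧ P F₃ = F₃) ∧
      -- (2) `F₁, F₂, F₃` are right `A`-linearly independent: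
      (∀ a b c : A,
        (fun i => F₁ i * a + F₂ i * b + F₃ i * c) = (0 : Fin 4 → A) →
        a = 0 ∧ b = 0 ∧ c = 0) ∧
      -- (3) the projections of the canonical basis vectors:
      (P (Pi.single 0 1) = (fun i => -(F₁ i * X₄) - F₂ i * X₃ - F₃ i * X₂) ∧
        P (Pi.single 1 1) = (fun i => F₁ i * X₃ - F₂ i * X₄ + F₃ i * X₁) ∧
        P (Pi.single 2 1) = (fun i => -((starRingEnd ℂ q) • (F₁ i * X₂))
          + (starRingEnd ℂ q) • (F₂ i * X₁) + F₃ i * X₄) ∧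
        P (Pi.single 3 1) = (fun i => (starRingEnd ℂ q) • (F₁ i * X₁)
          + (starRingEnd ℂ q) • (F₂ i * X₂) - F₃ i * X₃)) ∧
      -- hence `P(A⁴)` is generated by `F₁, F₂, F₃`:
      (∀ U : Fin 4 → A, ∃ a b c : A,
        P U = fun i => F₁ i * a + F₂ i * b + F₃ i * c) := by
  have hq0 : q ≠ 0 := by rw [hq]; exact Complex.exp_ne_zero _
  have hqc : (starRingEnd ℂ q) = q⁻¹ := by
    rw [hq, ← Complex.exp_conj, ← Complex.exp_neg]
    congr 1
    simp only [map_mul, Complex.conj_I, Complex.conj_ofReal, map_ofNat]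
    ring
  rw [hqc] at h2 h3
  simp only [hqc]
  subst hXv hF₁ hF₂ hF₃
  have e11 : X₁ * X₁ = ((4:ℂ)⁻¹)•(Z*Z) + ((2:ℂ)⁻¹)•(Z*star Z) + ((4:ℂ)⁻¹)•(star Z*star Z) := by
    rw [hX₁, smul_mul_smul_comm, show (Z + star Z) * (Z + star Z) = Z*Z + Z*star Z + star Z*Z + star Z*star Z from by noncomm_ring, h5]
    match_scalars <;> (field_simp; try ring_nf; try simp [Complex.I_sq]; try ring)
  have e12 : X₁ * X₂ = (((4:ℂ)*Complex.I)⁻¹)•(Z*Z) - (((4:ℂ)*Complex.I)⁻¹)•(star Z*star Z) := by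
    rw [hX₁, hX₂, smul_mul_smul_comm, show (Z + star Z) * (Z - star Z) = Z*Z - Z*star Z + star Z*Z - star Z*star Z from by noncomm_ring, h5]
    match_scalars <;> (field_simp; try ring_nf; try simp [Complex.I_sq]; try ring)
  have e21 : X₂ * X₁ = (((4:ℂ)*Complex.I)⁻¹)•(Z*Z) - (((4:ℂ)*Complex.I)⁻¹)•(star Z*star Z) := by
    rw [hX₂, hX₁, smul_mul_smul_comm, show (Z - star Z) * (Z + star Z) = Z*Z + Z*star Z - star Z*Z - star Z*star Z from by noncomm_ring, h5]
    match_scalars <;> (field_simp; try ring_nf; try simp [Complex.I_sq]; try ring)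
  have e22 : X₂ * X₂ = -((4:ℂ)⁻¹)•(Z*Z) + ((2:ℂ)⁻¹)•(Z*star Z) - ((4:ℂ)⁻¹)•(star Z*star Z) := by
    rw [hX₂, smul_mul_smul_comm, show (Z - star Z) * (Z - star Z) = Z*Z - Z*star Z - star Z*Z + star Z*star Z from by noncomm_ring, h5]
    match_scalars <;> (field_simp; try ring_nf; try simp [Complex.I_sq]; try ring)
  have e33 : X₃ * X₃ = ((4:ℂ)⁻¹)•(W*W) + ((2:ℂ)⁻¹)•((1:A)) - ((2:ℂ)⁻¹)•(Z*star Z) + ((4:ℂ)⁻¹)•(star W*star W) := by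
    rw [hX₃, smul_mul_smul_comm, show (W + star W) * (W + star W) = W*W + W*star W + star W*W + star W*star W from by noncomm_ring, h6, h7]
    match_scalars <;> (field_simp; try ring_nf; try simp [Complex.I_sq]; try ring)
  have e34 : X₃ * X₄ = (((4:ℂ)*Complex.I)⁻¹)•(W*W) - (((4:ℂ)*Complex.I)⁻¹)•(star W*star W) := by
    rw [hX₃, hX₄, smul_mul_smul_comm, show (W + star W) * (W - star W) = W*W - W*star W + star W*W - star W*star W from by noncomm_ring, h6]
    match_scalars <;> (field_simp; try ring_nf; try simp [Complex.I_sq]; try ring)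
  have e43 : X₄ * X₃ = (((4:ℂ)*Complex.I)⁻¹)•(W*W) - (((4:ℂ)*Complex.I)⁻¹)•(star W*star W) := by
    rw [hX₄, hX₃, smul_mul_smul_comm, show (W - star W) * (W + star W) = W*W + W*star W - star W*W - star W*star W from by noncomm_ring, h6]
    match_scalars <;> (field_simp; try ring_nf; try simp [Complex.I_sq]; try ring)
  have e44 : X₄ * X₄ = -((4:ℂ)⁻¹)•(W*W) + ((2:ℂ)⁻¹)•((1:A)) - ((2:ℂ)⁻¹)•(Z*star Z) - ((4:ℂ)⁻¹)•(star W*star W) := by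
    rw [hX₄, smul_mul_smul_comm, show (W - star W) * (W - star W) = W*W - W*star W - star W*W + star W*star W from by noncomm_ring, h6, h7]
    match_scalars <;> (field_simp; try ring_nf; try simp [Complex.I_sq]; try ring)
  have e13 : X₁ * X₃ = ((4:ℂ)⁻¹)•(Z*W) + ((4:ℂ)⁻¹)•(Z*star W) + ((4:ℂ)⁻¹)•(star Z*W) + ((4:ℂ)⁻¹)•(star Z*star W) := by
    rw [hX₁, hX₃, smul_mul_smul_comm, show (Z + star Z) * (W + star W) = Z*W + Z*star W + star Z*W + star Z*star W from by noncomm_ring]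
    match_scalars <;> (field_simp; try ring_nf; try simp [Complex.I_sq]; try ring)
  have e14 : X₁ * X₄ = (((4:ℂ)*Complex.I)⁻¹)•(Z*W) - (((4:ℂ)*Complex.I)⁻¹)•(Z*star W) + (((4:ℂ)*Complex.I)⁻¹)•(star Z*W) - (((4:ℂ)*Complex.I)⁻¹)•(star Z*star W) := by
    rw [hX₁, hX₄, smul_mul_smul_comm, show (Z + star Z) * (W - star W) = Z*W - Z*star W + star Z*W - star Z*star W from by noncomm_ring]
    match_scalars <;> (field_simp; try ring_nf; try simp [Complex.I_sq]; try ring)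
  have e23 : X₂ * X₃ = (((4:ℂ)*Complex.I)⁻¹)•(Z*W) + (((4:ℂ)*Complex.I)⁻¹)•(Z*star W) - (((4:ℂ)*Complex.I)⁻¹)•(star Z*W) - (((4:ℂ)*Complex.I)⁻¹)•(star Z*star W) := by
    rw [hX₂, hX₃, smul_mul_smul_comm, show (Z - star Z) * (W + star W) = Z*W + Z*star W - star Z*W - star Z*star W from by noncomm_ring]
    match_scalars <;> (field_simp; try ring_nf; try simp [Complex.I_sq]; try ring)
  have e24 : X₂ * X₄ = -((4:ℂ)⁻¹)•(Z*W) + ((4:ℂ)⁻¹)•(Z*star W) + ((4:ℂ)⁻¹)•(star Z*W) - ((4:ℂ)⁻¹)•(star Z*star W) := by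
    rw [hX₂, hX₄, smul_mul_smul_comm, show (Z - star Z) * (W - star W) = Z*W - Z*star W - star Z*W + star Z*star W from by noncomm_ring]
    match_scalars <;> (field_simp; try ring_nf; try simp [Complex.I_sq]; try ring)
  have e31 : X₃ * X₁ = ((4:ℂ)⁻¹*q)•(Z*W) + ((4:ℂ)⁻¹*q⁻¹)•(Z*star W) + ((4:ℂ)⁻¹*q⁻¹)•(star Z*W) + ((4:ℂ)⁻¹*q)•(star Z*star W) := by
    rw [hX₃, hX₁, smul_mul_smul_comm, show (W + star W) * (Z + star Z) = W*Z + W*star Z + star W*Z + star W*star Z from by noncomm_ring, h1, h2, h3, h4]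
    match_scalars <;> (field_simp; try ring_nf; try simp [Complex.I_sq]; try ring)
  have e32 : X₃ * X₂ = (((4:ℂ)*Complex.I)⁻¹*q)•(Z*W) + (((4:ℂ)*Complex.I)⁻¹*q⁻¹)•(Z*star W) - (((4:ℂ)*Complex.I)⁻¹*q⁻¹)•(star Z*W) - (((4:ℂ)*Complex.I)⁻¹*q)•(star Z*star W) := by
    rw [hX₃, hX₂, smul_mul_smul_comm, show (W + star W) * (Z - star Z) = W*Z - W*star Z + star W*Z - star W*star Z from by noncomm_ring, h1, h2, h3, h4]
    match_scalars <;> (field_simp; try ring_nf; try simp [Complex.I_sq]; try ring)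
  have e41 : X₄ * X₁ = (((4:ℂ)*Complex.I)⁻¹*q)•(Z*W) - (((4:ℂ)*Complex.I)⁻¹*q⁻¹)•(Z*star W) + (((4:ℂ)*Complex.I)⁻¹*q⁻¹)•(star Z*W) - (((4:ℂ)*Complex.I)⁻¹*q)•(star Z*star W) := by
    rw [hX₄, hX₁, smul_mul_smul_comm, show (W - star W) * (Z + star Z) = W*Z + W*star Z - star W*Z - star W*star Z from by noncomm_ring, h1, h2, h3, h4]
    match_scalars <;> (field_simp; try ring_nf; try simp [Complex.I_sq]; try ring)
  have e42 : X₄ * X₂ = -((4:ℂ)⁻¹*q)•(Z*W) + ((4:ℂ)⁻¹*q⁻¹)•(Z*star W) + ((4:ℂ)⁻¹*q⁻¹)•(star Z*W) - ((4:ℂ)⁻¹*q)•(star Z*star W) := by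
    rw [hX₄, hX₂, smul_mul_smul_comm, show (W - star W) * (Z - star Z) = W*Z - W*star Z - star W*Z + star W*star Z from by noncomm_ring, h1, h2, h3, h4]
    match_scalars <;> (field_simp; try ring_nf; try simp [Complex.I_sq]; try ring)
  have o11 : (-X₄) * (-X₄) + (X₃) * (X₃) + (-(q⁻¹ • X₂)) * (-(q • X₂)) + (q⁻¹ • X₁) * (q • X₁) = (1:A) := by
    simp only [mul_neg, neg_mul, mul_smul_comm, smul_mul_assoc, smul_smul, neg_neg]
    simp only [e11, e12, e21, e22, e13, e14, e23, e24, e31, e32, e41, e42, e33, e34, e43, e44]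
    match_scalars <;> (field_simp; try ring_nf; try simp [Complex.I_sq]; try ring)
  have o12 : (-X₄) * (-X₃) + (X₃) * (-X₄) + (-(q⁻¹ • X₂)) * (q • X₁) + (q⁻¹ • X₁) * (q • X₂) = (0:A) := by
    simp only [mul_neg, neg_mul, mul_smul_comm, smul_mul_assoc, smul_smul, neg_neg]
    simp only [e11, e12, e21, e22, e13, e14, e23, e24, e31, e32, e41, e42, e33, e34, e43, e44]
    match_scalars <;> (field_simp; try ring_nf; try simp [Complex.I_sq]; try ring)
  have o13 : (-X₄) * (-X₂) + (X₃) * (X₁) + (-(q⁻¹ • X₂)) * (X₄) + (q⁻¹ • X₁) * (-X₃) = (0:A) := by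
    simp only [mul_neg, neg_mul, mul_smul_comm, smul_mul_assoc, smul_smul, neg_neg]
    simp only [e11, e12, e21, e22, e13, e14, e23, e24, e31, e32, e41, e42, e33, e34, e43, e44]
    match_scalars <;> (field_simp; try ring_nf; try simp [Complex.I_sq]; try ring)
  have o21 : (-X₃) * (-X₄) + (-X₄) * (X₃) + (q⁻¹ • X₁) * (-(q • X₂)) + (q⁻¹ • X₂) * (q • X₁) = (0:A) := by
    simp only [mul_neg, neg_mul, mul_smul_comm, smul_mul_assoc, smul_smul, neg_neg]
    simp only [e11, e12, e21, e22, e13, e14, e23, e24, e31, e32, e41, e42, e33, e34, e43, e44]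
    match_scalars <;> (field_simp; try ring_nf; try simp [Complex.I_sq]; try ring)
  have o22 : (-X₃) * (-X₃) + (-X₄) * (-X₄) + (q⁻¹ • X₁) * (q • X₁) + (q⁻¹ • X₂) * (q • X₂) = (1:A) := by
    simp only [mul_neg, neg_mul, mul_smul_comm, smul_mul_assoc, smul_smul, neg_neg]
    simp only [e11, e12, e21, e22, e13, e14, e23, e24, e31, e32, e41, e42, e33, e34, e43, e44]
    match_scalars <;> (field_simp; try ring_nf; try simp [Complex.I_sq]; try ring)
  have o23 : (-X₃) * (-X₂) + (-X₄) * (X₁) + (q⁻¹ • X₁) * (X₄) + (q⁻¹ • X₂) * (-X₃) = (0:A) := by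
    simp only [mul_neg, neg_mul, mul_smul_comm, smul_mul_assoc, smul_smul, neg_neg]
    simp only [e11, e12, e21, e22, e13, e14, e23, e24, e31, e32, e41, e42, e33, e34, e43, e44]
    match_scalars <;> (field_simp; try ring_nf; try simp [Complex.I_sq]; try ring)
  have o31 : (-X₂) * (-X₄) + (X₁) * (X₃) + (X₄) * (-(q • X₂)) + (-X₃) * (q • X₁) = (0:A) := by
    simp only [mul_neg, neg_mul, mul_smul_comm, smul_mul_assoc, smul_smul, neg_neg]
    simp only [e11, e12, e21, e22, e13, e14, e23, e24, e31, e32, e41, e42, e33, e34, e43, e44]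
    match_scalars <;> (field_simp; try ring_nf; try simp [Complex.I_sq]; try ring)
  have o32 : (-X₂) * (-X₃) + (X₁) * (-X₄) + (X₄) * (q • X₁) + (-X₃) * (q • X₂) = (0:A) := by
    simp only [mul_neg, neg_mul, mul_smul_comm, smul_mul_assoc, smul_smul, neg_neg]
    simp only [e11, e12, e21, e22, e13, e14, e23, e24, e31, e32, e41, e42, e33, e34, e43, e44]
    match_scalars <;> (field_simp; try ring_nf; try simp [Complex.I_sq]; try ring)
  have o33 : (-X₂) * (-X₂) + (X₁) * (X₁) + (X₄) * (X₄) + (-X₃) * (-X₃) = (1:A) := by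
    simp only [mul_neg, neg_mul, mul_smul_comm, smul_mul_assoc, smul_smul, neg_neg]
    simp only [e11, e12, e21, e22, e13, e14, e23, e24, e31, e32, e41, e42, e33, e34, e43, e44]
    match_scalars <;> (field_simp; try ring_nf; try simp [Complex.I_sq]; try ring)

  have s1 : (∑ i, ![X₁, X₂, X₃, X₄] i * ![-X₄, X₃, -(q • X₂), q • X₁] i) = 0 := by
    simp only [Fin.sum_univ_four, Matrix.cons_val_zero, Matrix.cons_val_one, Matrix.cons_val_two, Matrix.cons_val_three, Matrix.head_cons, Matrix.tail_cons]
    simp only [mul_neg, neg_mul, mul_smul_comm, smul_mul_assoc, smul_smul, neg_neg]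
    simp only [e11, e12, e21, e22, e13, e14, e23, e24, e31, e32, e41, e42, e33, e34, e43, e44]
    match_scalars <;> (field_simp; try ring_nf; try simp [Complex.I_sq]; try ring)
  have s2 : (∑ i, ![X₁, X₂, X₃, X₄] i * ![-X₃, -X₄, q • X₁, q • X₂] i) = 0 := by
    simp only [Fin.sum_univ_four, Matrix.cons_val_zero, Matrix.cons_val_one, Matrix.cons_val_two, Matrix.cons_val_three, Matrix.head_cons, Matrix.tail_cons]
    simp only [mul_neg, neg_mul, mul_smul_comm, smul_mul_assoc, smul_smul, neg_neg]
    simp only [e11, e12, e21, e22, e13, e14, e23, e24, e31, e32, e41, e42, e33, e34, e43, e44]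
    match_scalars <;> (field_simp; try ring_nf; try simp [Complex.I_sq]; try ring)
  have s3 : (∑ i, ![X₁, X₂, X₃, X₄] i * ![-X₂, X₁, X₄, -X₃] i) = 0 := by
    simp only [Fin.sum_univ_four, Matrix.cons_val_zero, Matrix.cons_val_one, Matrix.cons_val_two, Matrix.cons_val_three, Matrix.head_cons, Matrix.tail_cons]
    simp only [mul_neg, neg_mul, mul_smul_comm, smul_mul_assoc, smul_smul, neg_neg]
    simp only [e11, e12, e21, e22, e13, e14, e23, e24, e31, e32, e41, e42, e33, e34, e43, e44]
    match_scalars <;> (field_simp; try ring_nf; try simp [Complex.I_sq]; try ring)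
  have hproj : ∀ G : Fin 4 → A, (∑ i, ![X₁, X₂, X₃, X₄] i * G i) = 0 → P G = G := by
    intro G hG
    funext i
    rw [hP]
    have hsum : (∑ j, ![X₁, X₂, X₃, X₄] i * ![X₁, X₂, X₃, X₄] j * G j) = ![X₁, X₂, X₃, X₄] i * ∑ j, ![X₁, X₂, X₃, X₄] j * G j := by
      rw [Finset.mul_sum]
      exact Finset.sum_congr rfl fun j _ => mul_assoc _ _ _
    rw [hsum, hG, mul_zero, sub_zero]
  have P30 : P (Pi.single 0 1) = (fun i => -(![-X₄, X₃, -(q • X₂), q • X₁] i * X₄) - ![-X₃, -X₄, q • X₁, q • X₂] i * X₃ - ![-X₂, X₁, X₄, -X₃] i * X₂) := by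
    funext i
    rw [hP]
    fin_cases i <;>
      simp [Fin.sum_univ_four, Pi.single_apply, Matrix.cons_val_zero, Matrix.cons_val_one, Matrix.cons_val_two, Matrix.cons_val_three, Matrix.head_cons, Matrix.tail_cons] <;>
      · try simp only [mul_neg, neg_mul, mul_smul_comm, smul_mul_assoc, smul_smul, neg_neg]
        try simp only [e11, e12, e21, e22, e13, e14, e23, e24, e31, e32, e41, e42, e33, e34, e43, e44]
        match_scalars <;> (field_simp; try ring_nf; try simp [Complex.I_sq]; try ring)
  have P31 : P (Pi.single 1 1) = (fun i => ![-X₄, X₃, -(q • X₂), q • X₁] i * X₃ - ![-X₃, -X₄, q • X₁, q • X₂] i * X₄ + ![-X₂, X₁, X₄, -X₃] i * X₁) := by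
    funext i
    rw [hP]
    fin_cases i <;>
      simp [Fin.sum_univ_four, Pi.single_apply, Matrix.cons_val_zero, Matrix.cons_val_one, Matrix.cons_val_two, Matrix.cons_val_three, Matrix.head_cons, Matrix.tail_cons] <;>
      · try simp only [mul_neg, neg_mul, mul_smul_comm, smul_mul_assoc, smul_smul, neg_neg]
        try simp only [e11, e12, e21, e22, e13, e14, e23, e24, e31, e32, e41, e42, e33, e34, e43, e44]
        match_scalars <;> (field_simp; try ring_nf; try simp [Complex.I_sq]; try ring)
  have P32 : P (Pi.single 2 1) = (fun i => -(q⁻¹ • (![-X₄, X₃, -(q • X₂), q • X₁] i * X₂)) + q⁻¹ • (![-X₃, -X₄, q • X₁, q • X₂] i * X₁) + ![-X₂, X₁, X₄, -X₃] i * X₄) := by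
    funext i
    rw [hP]
    fin_cases i <;>
      simp [Fin.sum_univ_four, Pi.single_apply, Matrix.cons_val_zero, Matrix.cons_val_one, Matrix.cons_val_two, Matrix.cons_val_three, Matrix.head_cons, Matrix.tail_cons] <;>
      · try simp only [mul_neg, neg_mul, mul_smul_comm, smul_mul_assoc, smul_smul, neg_neg]
        try simp only [e11, e12, e21, e22, e13, e14, e23, e24, e31, e32, e41, e42, e33, e34, e43, e44]
        match_scalars <;> (field_simp; try ring_nf; try simp [Complex.I_sq]; try ring)
  have P33 : P (Pi.single 3 1) = (fun i => q⁻¹ • (![-X₄, X₃, -(q • X₂), q • X₁] i * X₁) + q⁻¹ • (![-X₃, -X₄, q • X₁, q • X₂] i * X₂) - ![-X₂, X₁, X₄, -X₃] i * X₃) := by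
    funext i
    rw [hP]
    fin_cases i <;>
      simp [Fin.sum_univ_four, Pi.single_apply, Matrix.cons_val_zero, Matrix.cons_val_one, Matrix.cons_val_two, Matrix.cons_val_three, Matrix.head_cons, Matrix.tail_cons] <;>
      · try simp only [mul_neg, neg_mul, mul_smul_comm, smul_mul_assoc, smul_smul, neg_neg]
        try simp only [e11, e12, e21, e22, e13, e14, e23, e24, e31, e32, e41, e42, e33, e34, e43, e44]
        match_scalars <;> (field_simp; try ring_nf; try simp [Complex.I_sq]; try ring)
  have hPU : ∀ (U : Fin 4 → A) (i : Fin 4), P U i =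
      P (Pi.single 0 1) i * U 0 + P (Pi.single 1 1) i * U 1 +
      P (Pi.single 2 1) i * U 2 + P (Pi.single 3 1) i * U 3 := by
    intro U i
    simp only [hP, Fin.sum_univ_four]
    fin_cases i <;>
      simp [Pi.single_apply, Matrix.cons_val_zero, Matrix.cons_val_one, Matrix.cons_val_two, Matrix.cons_val_three, Matrix.head_cons, Matrix.tail_cons] <;>
      noncomm_ring
  refine ⟨⟨s1, s2, s3⟩, ⟨hproj _ s1, hproj _ s2, hproj _ s3⟩, ?_, ⟨P30, P31, P32, P33⟩, ?_⟩
  · intro a b c h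
    have happ : ∀ i : Fin 4, ![-X₄, X₃, -(q • X₂), q • X₁] i * a + ![-X₃, -X₄, q • X₁, q • X₂] i * b + ![-X₂, X₁, X₄, -X₃] i * c = 0 := fun i => congrFun h i
    have ha0 : (-X₄) * a + (-X₃) * b + (-X₂) * c = 0 := by
      have := happ 0; simp only [Matrix.cons_val_zero, Matrix.cons_val_one, Matrix.cons_val_two, Matrix.cons_val_three, Matrix.head_cons, Matrix.tail_cons] at this; exact this
    have ha1 : X₃ * a + (-X₄) * b + X₁ * c = 0 := by
      have := happ 1; simp only [Matrix.cons_val_zero, Matrix.cons_val_one, Matrix.cons_val_two, Matrix.cons_val_three, Matrix.head_cons, Matrix.tail_cons] at this; exact this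
    have ha2 : (-(q • X₂)) * a + (q • X₁) * b + X₄ * c = 0 := by
      have := happ 2; simp only [Matrix.cons_val_zero, Matrix.cons_val_one, Matrix.cons_val_two, Matrix.cons_val_three, Matrix.head_cons, Matrix.tail_cons] at this; exact this
    have ha3 : (q • X₁) * a + (q • X₂) * b + (-X₃) * c = 0 := by
      have := happ 3; simp only [Matrix.cons_val_zero, Matrix.cons_val_one, Matrix.cons_val_two, Matrix.cons_val_three, Matrix.head_cons, Matrix.tail_cons] at this; exact this
    refine ⟨?_, ?_, ?_⟩
    · have k := expand4 (-X₄) X₃ (-(q⁻¹ • X₂)) (q⁻¹ • X₁) (-X₄) X₃ (-(q • X₂)) (q • X₁)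
        (-X₃) (-X₄) (q • X₁) (q • X₂) (-X₂) X₁ X₄ (-X₃) a b c
      rw [ha0, ha1, ha2, ha3, o11, o12, o13] at k
      simpa using k.symm
    · have k := expand4 (-X₃) (-X₄) (q⁻¹ • X₁) (q⁻¹ • X₂) (-X₄) X₃ (-(q • X₂)) (q • X₁)
        (-X₃) (-X₄) (q • X₁) (q • X₂) (-X₂) X₁ X₄ (-X₃) a b c
      rw [ha0, ha1, ha2, ha3, o21, o22, o23] at k
      simpa using k.symm
    · have k := expand4 (-X₂) X₁ X₄ (-X₃) (-X₄) X₃ (-(q • X₂)) (q • X₁)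
        (-X₃) (-X₄) (q • X₁) (q • X₂) (-X₂) X₁ X₄ (-X₃) a b c
      rw [ha0, ha1, ha2, ha3, o31, o32, o33] at k
      simpa using k.symm
  · intro U
    refine ⟨-(X₄ * U 0) + X₃ * U 1 - q⁻¹ • (X₂ * U 2) + q⁻¹ • (X₁ * U 3),
            -(X₃ * U 0) - X₄ * U 1 + q⁻¹ • (X₁ * U 2) + q⁻¹ • (X₂ * U 3),
            -(X₂ * U 0) + X₁ * U 1 + X₄ * U 2 - X₃ * U 3, ?_⟩
    funext i
    rw [hPU U i, congrFun P30 i, congrFun P31 i, congrFun P32 i, congrFun P33 i]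
    simp only [mul_add, mul_sub, mul_neg, mul_smul_comm, smul_mul_assoc, add_mul, sub_mul,
      neg_mul, mul_assoc, neg_neg]
    abel
end
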